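/- arXiv:2504.11086 — 12 statements merged into one kernel-verified Lean document; each statement's English description precedes it below -/
import Mathlib

section
/- If S is a t-almost-equiangular subset of the unit sphere S^{n-1} (every 3-element subset contains a pair with inner product t) with t ∈ [-1, 0], then |S| ≤ 2(n+1). -/
/-!
Lift each `x ∈ S` to `(x, √(-t)) ∈ E × ℝ`. The Gram matrix `G` of the lifts has entries
`⟪x, y⟫ - t`, so it is positive semidefinite of rank at most `dim E + 1`, and `B = G - a • 1` with
`a = 1 - t` vanishes on the diagonal and at every pair with inner product `t`. Hence
`B x y * B y z * B z x = 0` for all `x y z`, so `trace (B ^ 3) = 0`. For the eigenvalues `λ ≥ 0`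
of `G` this gives `∑ λ = a |S|` and `∑ (λ - a) ^ 3 = 0`, hence `∑ (λ + a) (λ - 2a) ^ 2 = 2 a³ |S|`.
Every summand is nonnegative and each zero eigenvalue contributes `4 a³`, so `|S| ≤ 2 rank G`.
-/

open scoped RealInnerProductSpace
open Polynomial

namespace Matrix

theorem trace_pow_three {m R : Type*} [Fintype m] [DecidableEq m] [CommSemiring R]
    (B : Matrix m m R) : (B ^ 3).trace = ∑ i, ∑ j, ∑ k, B i j * B j k * B k i := by
  simp only [pow_three, trace, diag, mul_apply, Finset.mul_sum, mul_assoc]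

theorem rank_gram_le_finrank {𝕜 E n : Type*} [RCLike 𝕜] [NormedAddCommGroup E]
    [InnerProductSpace 𝕜 E] [FiniteDimensional 𝕜 E] [Fintype n] (v : n → E) :
    (gram 𝕜 v).rank ≤ Module.finrank 𝕜 E := by
  rw [gram_eq_conjTranspose_mul (stdOrthonormalBasis 𝕜 E) v]
  exact (rank_mul_le_left _ _).trans ((rank_le_card_width _).trans (by simp))

theorem IsHermitian.trace_aeval {𝕜 m : Type*} [RCLike 𝕜] [Fintype m] [DecidableEq m]
    {A : Matrix m m 𝕜} (hA : A.IsHermitian) (p : 𝕜[X]) :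
    (aeval A p).trace = ∑ i, p.eval (hA.eigenvalues i : 𝕜) := by
  conv_lhs => rw [hA.spectral_theorem, aeval_algHom_apply]
  rw [Unitary.conjStarAlgAut_apply, trace_mul_cycle, Unitary.coe_star_mul_self, one_mul,
    ← diagonalAlgHom_apply (R := 𝕜), aeval_algHom_apply]
  simp [aeval_pi_apply]

end Matrix

theorem card_le_two_mul_card_ne_zero {ι : Type*} [Fintype ι] {f : ι → ℝ} {a : ℝ} (ha : 0 < a)
    (hf : ∀ i, 0 ≤ f i) (hsum : ∑ i, f i = a * Fintype.card ι)
    (hcube : ∑ i, (f i - a) ^ 3 = 0) :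
    Fintype.card ι ≤ 2 * Fintype.card {i // f i ≠ 0} := by
  have hterm : ∀ i, 4 * a ^ 3 * (if f i = 0 then 1 else 0) ≤ (f i + a) * (f i - 2 * a) ^ 2 := by
    intro i
    split_ifs with h
    · exact le_of_eq (by rw [h]; ring)
    · rw [mul_zero]
      exact mul_nonneg (by linarith [hf i]) (sq_nonneg _)
  have htotal : ∑ i, (f i + a) * (f i - 2 * a) ^ 2 = 2 * a ^ 3 * Fintype.card ι := by
    have hexpand : ∀ i,
        (f i + a) * (f i - 2 * a) ^ 2 = (f i - a) ^ 3 - 3 * a ^ 2 * f i + 5 * a ^ 3 := by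
      intro i; ring
    simp only [hexpand, Finset.sum_add_distrib, Finset.sum_sub_distrib, hcube, ← Finset.mul_sum,
      hsum, Finset.sum_const, Finset.card_univ, nsmul_eq_mul]
    ring
  have hzeros : 4 * a ^ 3 * Fintype.card {i // f i = 0} ≤ 2 * a ^ 3 * Fintype.card ι := by
    rw [← htotal, Fintype.card_subtype, ← Finset.sum_boole, Finset.mul_sum]
    exact Finset.sum_le_sum fun i _ => hterm i
  have hsplit : (Fintype.card {i // f i ≠ 0} : ℝ) =
      Fintype.card ι - Fintype.card {i // f i = 0} := by
    rw [Fintype.card_subtype_compl, Nat.cast_sub (Fintype.card_subtype_le _)]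
  have : (Fintype.card ι : ℝ) ≤ 2 * Fintype.card {i // f i ≠ 0} := by
    rw [hsplit]
    nlinarith [pow_pos ha 3]
  exact_mod_cast this

theorem Matrix.PosSemidef.card_le_two_mul_rank {m : Type*} [Fintype m] [DecidableEq m]
    {A : Matrix m m ℝ} (hA : A.PosSemidef) {a : ℝ} (ha : 0 < a)
    (htriangle : ∀ i j k, (A - a • 1) i j * (A - a • 1) j k * (A - a • 1) k i = 0) :
    Fintype.card m ≤ 2 * A.rank := by
  have hdiag : ∀ i, A i i = a := fun i => by
    simpa [sub_eq_zero] using htriangle i i i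
  have htrace : ∑ i, hA.isHermitian.eigenvalues i = a * Fintype.card m := by
    have := hA.isHermitian.trace_eq_sum_eigenvalues
    simp only [trace, diag, hdiag, RCLike.ofReal_real_eq_id, id_eq, Finset.sum_const,
      Finset.card_univ, nsmul_eq_mul] at this
    linarith
  have hcube : ∑ i, (hA.isHermitian.eigenvalues i - a) ^ 3 = 0 := by
    have := hA.isHermitian.trace_aeval ((X - C a) ^ 3)
    rw [map_pow, map_sub, aeval_X, aeval_C, Algebra.algebraMap_eq_smul_one, trace_pow_three] at this
    simp only [htriangle, Finset.sum_const_zero] at this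
    simpa using this.symm
  rw [hA.isHermitian.rank_eq_card_non_zero_eigs]
  exact card_le_two_mul_card_ne_zero ha hA.eigenvalues_nonneg htrace hcube

theorem card_le_two_mul_finrank_add_one {E : Type*} [NormedAddCommGroup E]
    [InnerProductSpace ℝ E] [FiniteDimensional ℝ E] {t : ℝ} (ht : t ≤ 0) (S : Finset E)
    (hunit : ∀ x ∈ S, ‖x‖ = 1)
    (halmost : ∀ x ∈ S, ∀ y ∈ S, ∀ z ∈ S, x ≠ y → x ≠ z → y ≠ z →
      ⟪x, y⟫ = t ∨ ⟪x, z⟫ = t ∨ ⟪y, z⟫ = t) :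
    S.card ≤ 2 * (Module.finrank ℝ E + 1) := by
  classical
  set v : S → WithLp 2 (E × ℝ) := fun x => WithLp.toLp 2 ((x : E), √(-t))
  set B := Matrix.gram ℝ v - (1 - t) • 1
  have hB : ∀ x y, B x y = ⟪(x : E), y⟫ - t - (1 - t) * (1 : Matrix S S ℝ) x y := by
    intro x y
    simp [B, v, Matrix.gram_apply, WithLp.prod_inner_apply, Real.sq_sqrt (neg_nonneg.2 ht)]
    ring
  have hB_diag : ∀ x, B x x = 0 := fun x => by
    simp [hB, hunit x x.2]
  have hB_of_inner : ∀ x y : S, ⟪(x : E), y⟫ = t → B x y = 0 := fun x y hxy => by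
    rcases eq_or_ne x y with rfl | hne
    · exact hB_diag x
    · simp [hB, hxy, hne]
  have htriangle : ∀ x y z, B x y * B y z * B z x = 0 := by
    intro x y z
    by_cases hxy : x = y; · simp [hxy, hB_diag]
    by_cases hyz : y = z; · simp [hyz, hB_diag]
    by_cases hxz : x = z; · simp [hxz, hB_diag]
    rcases halmost x x.2 y y.2 z z.2 (Subtype.coe_ne_coe.2 hxy) (Subtype.coe_ne_coe.2 hxz)
      (Subtype.coe_ne_coe.2 hyz) with h | h | h
    · simp [hB_of_inner x y h]
    · simp [hB_of_inner z x (by rwa [real_inner_comm])]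
    · simp [hB_of_inner y z h]
  calc S.card = Fintype.card S := (Fintype.card_coe S).symm
    _ ≤ 2 * (Matrix.gram ℝ v).rank :=
      (Matrix.posSemidef_gram ℝ v).card_le_two_mul_rank (by linarith) htriangle
    _ ≤ 2 * Module.finrank ℝ (WithLp 2 (E × ℝ)) := by
      gcongr
      exact Matrix.rank_gram_le_finrank v
    _ = 2 * (Module.finrank ℝ E + 1) := by
      rw [(WithLp.linearEquiv 2 ℝ (E × ℝ)).finrank_eq, Module.finrank_prod, Module.finrank_self]

theorem almost_equiangular_card_le (n : ℕ) (t : ℝ) (ht : t ∈ Set.Icc (-1 : ℝ) 0)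
    (S : Finset (EuclideanSpace ℝ (Fin n)))
    (hunit : ∀ x ∈ S, ‖x‖ = 1)
    (halmost : ∀ x ∈ S, ∀ y ∈ S, ∀ z ∈ S, x ≠ y → x ≠ z → y ≠ z →
      ⟪x, y⟫ = t ∨ ⟪x, z⟫ = t ∨ ⟪y, z⟫ = t) :
    S.card ≤ 2 * (n + 1) := by
  simpa using card_le_two_mul_finrank_add_one ht.2 S hunit halmost
end

section
/- If S is a t-almost-equiangular subset of S^{n-1} with t ∈ [-1, 0] and |S| = 2(n+1), then t = -1/n. -/
/-!
Let `G` be the Gram matrix of `S`, `J` the all-ones matrix and `m = |S|`. Since `t ≤ 0`, the matrix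
`N = G - t J` is positive semidefinite with constant diagonal `1 - t`, and almost-equiangularity
says that the off-diagonal support of `N` is triangle-free, so `tr (N - (1 - t) I)³ = 0`. The
Cauchy–Schwarz inequality `(tr N²)² ≤ tr N · tr N³` then gives `tr N² ≤ 2 (1 - t)² m`. On the other
hand `rank G ≤ n` gives `m² = (tr G)² ≤ n tr G²`, and `tr G² ≤ tr N² - t² m²` because the entries
of `G` have nonnegative sum. Hence `m² ≤ n (2 (1 - t)² m - t² m²)`, which for `m = 2 (n + 1)` reads
`(n + 1) (1 + n t)² ≤ 0`.
-/

open Matrix Module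
open scoped RealInnerProductSpace

namespace Matrix

variable {ι : Type*} [Fintype ι]

theorem sq_trace_transpose_mul_le {κ : Type*} [Fintype κ] (X Y : Matrix ι κ ℝ) :
    (Xᵀ * Y).trace ^ 2 ≤ (Xᵀ * X).trace * (Yᵀ * Y).trace := by
  have hfrob : ∀ Z W : Matrix ι κ ℝ, (Zᵀ * W).trace = ∑ p : ι × κ, Z p.1 p.2 * W p.1 p.2 := by
    intro Z W
    rw [Fintype.sum_prod_type, Finset.sum_comm]
    simp [trace, mul_apply]
  simpa only [hfrob, pow_two] using Finset.sum_mul_sq_le_sq_mul_sq Finset.univ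
    (fun p : ι × κ ↦ X p.1 p.2) (fun p ↦ Y p.1 p.2)

theorem sq_trace_gram_le_finrank_mul {E : Type*} [NormedAddCommGroup E] [InnerProductSpace ℝ E]
    [FiniteDimensional ℝ E] (v : ι → E) :
    (gram ℝ v).trace ^ 2 ≤ finrank ℝ E * (gram ℝ v * gram ℝ v).trace := by
  rw [gram_eq_conjTranspose_mul (stdOrthonormalBasis ℝ E) v, conjTranspose_eq_transpose_of_trivial]
  set A : Matrix (Fin (finrank ℝ E)) ι ℝ := of fun i j ↦ (stdOrthonormalBasis ℝ E).repr (v j) i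
  have h := sq_trace_transpose_mul_le (1 : Matrix (Fin (finrank ℝ E)) _ ℝ) (A * Aᵀ)
  simp only [transpose_one, Matrix.one_mul, trace_one, Fintype.card_fin] at h
  convert h using 2
  · exact trace_mul_comm _ _
  · rw [Matrix.mul_assoc, trace_mul_comm]
    simp only [Matrix.transpose_mul, transpose_transpose, Matrix.mul_assoc]

namespace PosSemidef

theorem sq_trace_mul_self_le [DecidableEq ι] {N : Matrix ι ι ℝ} (hN : N.PosSemidef) :
    (N * N).trace ^ 2 ≤ N.trace * (N * N * N).trace := by
  obtain ⟨R, hR, rfl⟩ : ∃ R : Matrix ι ι ℝ, R.PosSemidef ∧ R * R = N :=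
    open scoped MatrixOrder in
    ⟨CFC.sqrt N, nonneg_iff_posSemidef.mp (CFC.sqrt_nonneg N), CFC.sqrt_mul_sqrt_self N hN.nonneg⟩
  have hRt : Rᵀ = R := by rw [← conjTranspose_eq_transpose_of_trivial]; exact hR.1
  have h := sq_trace_transpose_mul_le R (R * R * R)
  simp only [Matrix.transpose_mul, hRt, Matrix.mul_assoc] at h ⊢
  exact h

theorem trace_mul_self_add_le {G : Matrix ι ι ℝ} (hG : G.PosSemidef) {s : ℝ} (hs : 0 ≤ s) :
    (G * G).trace + s ^ 2 * Fintype.card ι ^ 2 ≤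
      ((G + s • of fun _ _ ↦ 1) * (G + s • of fun _ _ ↦ 1)).trace := by
  have hsum : 0 ≤ ∑ i, ∑ j, G i j := by
    simpa [dotProduct, mulVec, Finset.sum_comm (γ := ι)] using hG.dotProduct_mulVec_nonneg 1
  have hexp : ((G + s • of fun _ _ ↦ 1) * (G + s • of fun _ _ ↦ 1)).trace =
      (G * G).trace + 2 * s * ∑ i, ∑ j, G i j + s ^ 2 * Fintype.card ι ^ 2 := by
    have hGJ : (G * of fun _ _ ↦ 1).trace = ∑ i, ∑ j, G i j := by simp [trace, mul_apply]
    have hJG : ((of fun _ _ ↦ 1) * G).trace = ∑ i, ∑ j, G i j := by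
      simp [trace, mul_apply]
      exact Finset.sum_comm
    have hJJ : ((of fun _ _ ↦ 1) * of fun _ _ ↦ 1 : Matrix ι ι ℝ).trace = Fintype.card ι ^ 2 := by
      simp [trace, mul_apply, sq]
    simp only [add_mul, mul_add, trace_add, smul_mul, Matrix.mul_smul, trace_smul, hGJ, hJG, hJJ,
      smul_eq_mul]
    ring
  rw [hexp]
  nlinarith

theorem trace_mul_self_le_of_triangleFree [DecidableEq ι] {N : Matrix ι ι ℝ} (hN : N.PosSemidef)
    {β : ℝ} (hdiag : ∀ i, N i i = β)
    (htri : ∀ i j k, i ≠ j → i ≠ k → j ≠ k → N i j = 0 ∨ N i k = 0 ∨ N j k = 0) :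
    (N * N).trace ≤ 2 * β ^ 2 * Fintype.card ι := by
  set M := N - β • 1 with hM
  have hNM : N = M + β • 1 := by rw [hM, sub_add_cancel]
  have hMdiag : ∀ i, M i i = 0 := by simp [hM, hdiag]
  have hMoff : ∀ i j, i ≠ j → M i j = N i j := by simp +contextual [hM]
  have hNsymm : ∀ i j, N j i = N i j := fun i j ↦ by simpa using hN.1.apply i j
  have hMh : Mᴴ = M := by
    rw [hM, conjTranspose_sub, conjTranspose_smul, conjTranspose_one, hN.1, star_trivial]
  have htriangle : ∀ i j k, M i j * M j k * M k i = 0 := by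
    intro i j k
    by_cases hij : i = j
    · simp [hij, hMdiag]
    by_cases hjk : j = k
    · simp [hjk, hMdiag]
    by_cases hik : i = k
    · simp [hik, hMdiag]
    rw [hMoff i j hij, hMoff j k hjk, hMoff k i (Ne.symm hik), hNsymm i k]
    rcases htri i j k hij hik hjk with h | h | h <;> simp [h]
  have htrM : M.trace = 0 := by simp [trace, hMdiag]
  have htrM3 : (M * M * M).trace = 0 := by simp [trace, mul_apply, Finset.sum_mul, htriangle]
  have hQ : 0 ≤ (M * M).trace := by
    simpa only [hMh] using (posSemidef_conjTranspose_mul_self M).trace_nonneg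
  have h1 : N.trace = β * Fintype.card ι := by simp [hNM, trace_add, htrM]
  have h2 : (N * N).trace = (M * M).trace + β ^ 2 * Fintype.card ι := by
    simp [hNM, add_mul, mul_add, trace_add, htrM]
    ring
  have h3 : (N * N * N).trace = 3 * β * (M * M).trace + β ^ 3 * Fintype.card ι := by
    simp [hNM, add_mul, mul_add, trace_add, htrM, htrM3]
    ring
  have hCS := hN.sq_trace_mul_self_le
  rw [h1, h2, h3] at hCS
  rw [h2]
  nlinarith [mul_nonneg (sq_nonneg β) (Nat.cast_nonneg (α := ℝ) (Fintype.card ι))]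

end PosSemidef

end Matrix

theorem sq_card_le_finrank_mul_of_almostEquiangular {ι E : Type*} [Fintype ι]
    [NormedAddCommGroup E] [InnerProductSpace ℝ E] [FiniteDimensional ℝ E] {v : ι → E} {t : ℝ}
    (ht : t ≤ 0) (hv : ∀ i, ‖v i‖ = 1)
    (halmost : ∀ i j k, i ≠ j → i ≠ k → j ≠ k →
      ⟪v i, v j⟫ = t ∨ ⟪v i, v k⟫ = t ∨ ⟪v j, v k⟫ = t) :
    (Fintype.card ι : ℝ) ^ 2 ≤
      finrank ℝ E * (2 * (1 - t) ^ 2 * Fintype.card ι - t ^ 2 * Fintype.card ι ^ 2) := by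
  classical
  set G := gram ℝ v
  set J : Matrix ι ι ℝ := of fun _ _ ↦ 1
  have hGdiag : ∀ i, G i i = 1 := fun i ↦ by simp [G, hv i]
  have hJ : J.PosSemidef := by simpa [vecMulVec] using posSemidef_vecMulVec_self_star (1 : ι → ℝ)
  have hN : (G + (-t) • J).PosSemidef := (posSemidef_gram ℝ v).add (hJ.smul (neg_nonneg.2 ht))
  have hNtri : ∀ i j k, i ≠ j → i ≠ k → j ≠ k →
      (G + (-t) • J) i j = 0 ∨ (G + (-t) • J) i k = 0 ∨ (G + (-t) • J) j k = 0 := by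
    intro i j k hij hik hjk
    simpa [G, J, add_neg_eq_zero] using halmost i j k hij hik hjk
  have hrank : G.trace ^ 2 ≤ finrank ℝ E * (G * G).trace := sq_trace_gram_le_finrank_mul v
  have hshift : (G * G).trace + (-t) ^ 2 * Fintype.card ι ^ 2 ≤
      ((G + (-t) • J) * (G + (-t) • J)).trace :=
    (posSemidef_gram ℝ v).trace_mul_self_add_le (neg_nonneg.2 ht)
  have htri : ((G + (-t) • J) * (G + (-t) • J)).trace ≤ 2 * (1 - t) ^ 2 * Fintype.card ι :=
    hN.trace_mul_self_le_of_triangleFree (fun i ↦ by simp [J, hGdiag, sub_eq_add_neg]) hNtri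
  have htrG : G.trace = Fintype.card ι := by simp [trace, hGdiag]
  rw [htrG] at hrank
  rw [neg_sq] at hshift
  exact hrank.trans (mul_le_mul_of_nonneg_left (by linarith) (Nat.cast_nonneg _))

theorem almost_equiangular_max_card_inner_eq (n : ℕ) (t : ℝ) (ht : t ∈ Set.Icc (-1 : ℝ) 0)
    (S : Finset (EuclideanSpace ℝ (Fin n)))
    (hunit : ∀ x ∈ S, ‖x‖ = 1)
    (halmost : ∀ x ∈ S, ∀ y ∈ S, ∀ z ∈ S, x ≠ y → x ≠ z → y ≠ z →
      ⟪x, y⟫ = t ∨ ⟪x, z⟫ = t ∨ ⟪y, z⟫ = t)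
    (hcard : S.card = 2 * (n + 1)) :
    t = -1 / n := by
  have hbound := sq_card_le_finrank_mul_of_almostEquiangular (v := ((↑) : S → EuclideanSpace ℝ (Fin n))) ht.2
    (fun x ↦ hunit x x.2) fun x y z hxy hxz hyz ↦ halmost x x.2 y y.2 z z.2
      (Subtype.coe_ne_coe.2 hxy) (Subtype.coe_ne_coe.2 hxz) (Subtype.coe_ne_coe.2 hyz)
  rw [Fintype.card_coe, hcard, finrank_euclideanSpace_fin] at hbound
  push_cast at hbound
  have hsq : (n + 1 : ℝ) * (1 + n * t) ^ 2 ≤ 0 := by nlinarith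
  have hkey : 1 + n * t = 0 := by
    nlinarith [sq_nonneg (1 + n * t), (n.cast_nonneg : (0 : ℝ) ≤ n)]
  have hn : (n : ℝ) ≠ 0 := fun h ↦ by simp [h] at hkey
  field_simp
  linarith
end

section
/- If S = {x_1, ..., x_{2(n+1)}} is a (-1/n)-almost-equiangular subset of S^{n-1} of cardinality 2(n+1), then the sum of the vectors in S is zero (the barycenter of S is the origin). -/
open scoped RealInnerProductSpace

/-!
Lift each `x ∈ S` to `(n^{-1/2}, x) ∈ ℝ^{n+1}`. The lifted vectors have inner products
`⟪x, y⟫ + 1/n`, so their Gram matrix `G` has size `N = 2(n+1)`, rank at most `n+1`, constant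
diagonal `c = (n+1)/n`, and on every triangle of distinct indices one entry vanishes; hence
`tr G³ = 3c tr G² - 2Nc³`. Together with the rank bound `(tr G)² ≤ (n+1) tr G²` this makes
`‖GY - 2cY‖² = tr G³ - 4c tr G² + 4c² tr G` nonpositive, where `Y` is the matrix of lifted vectors.
So `GY = 2cY`, i.e. `G / 2c` is an orthogonal projection, and `1ᵀG1 ≤ 2cN = 4(n+1)²/n`.
Since `1ᵀG1 = ‖∑ x‖² + 4(n+1)²/n`, the sum vanishes.
-/

open Finset Matrix

namespace Matrix

variable {ι κ : Type*} [Fintype ι] [Fintype κ]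

theorem sq_trace_le_card_mul_trace_mul_self {A : Matrix κ κ ℝ} (hA : A.IsSymm) :
    A.trace ^ 2 ≤ Fintype.card κ * (A * A).trace := by
  calc A.trace ^ 2 ≤ Fintype.card κ * ∑ i, A i i ^ 2 := sq_sum_le_card_mul_sum_sq
    _ ≤ Fintype.card κ * ∑ i, ∑ j, A i j ^ 2 := by
      gcongr with i
      exact single_le_sum (f := fun j ↦ A i j ^ 2) (fun _ _ ↦ sq_nonneg _) (mem_univ i)
    _ = Fintype.card κ * (A * A).trace := by
      simp only [trace, diag, mul_apply]
      congr 1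
      exact sum_congr rfl fun i _ ↦ sum_congr rfl fun j _ ↦ by rw [sq, hA.apply]

theorem sq_trace_mul_transpose_le (Y : Matrix ι κ ℝ) :
    (Y * Yᵀ).trace ^ 2 ≤ Fintype.card κ * (Y * Yᵀ * (Y * Yᵀ)).trace := by
  have hsq : (Y * Yᵀ * (Y * Yᵀ)).trace = (Yᵀ * Y * (Yᵀ * Y)).trace := by
    rw [Matrix.mul_assoc, trace_mul_comm Y, ← Matrix.mul_assoc, ← Matrix.mul_assoc]
  rw [trace_mul_comm Y Yᵀ, hsq]
  exact sq_trace_le_card_mul_trace_mul_self (by rw [IsSymm, transpose_mul, transpose_transpose])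

theorem trace_cube_eq_of_triangle_free {G : Matrix ι ι ℝ} {c : ℝ}
    (hdiag : ∀ x, G x x = c)
    (htri : ∀ x y z, x ≠ y → y ≠ z → z ≠ x → G x y = 0 ∨ G y z = 0 ∨ G z x = 0) :
    (G * G * G).trace = 3 * c * (G * G).trace - 2 * Fintype.card ι * c ^ 3 := by
  classical
  set Q := G - c • 1
  have hG : G = Q + c • 1 := by simp [Q]
  have hQ : ∀ x y, x ≠ y → Q x y = G x y := fun x y h ↦ by simp [Q, one_apply_ne h]
  have hQdiag : ∀ x, Q x x = 0 := fun x ↦ by simp [Q, hdiag]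
  have htrQ : Q.trace = 0 := sum_eq_zero fun x _ ↦ hQdiag x
  have htrQ3 : (Q * Q * Q).trace = 0 := by
    refine sum_eq_zero fun x _ ↦ ?_
    simp only [diag, mul_apply, sum_mul]
    refine sum_eq_zero fun z _ ↦ sum_eq_zero fun y _ ↦ ?_
    by_cases hxy : x = y
    · simp [hxy, hQdiag]
    by_cases hyz : y = z
    · simp [hyz, hQdiag]
    by_cases hzx : z = x
    · simp [hzx, hQdiag]
    rw [hQ x y hxy, hQ y z hyz, hQ z x hzx]
    rcases htri x y z hxy hyz hzx with h | h | h <;> simp [h]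
  have hG2 : G * G = Q * Q + (2 * c) • Q + c ^ 2 • 1 := by
    rw [hG]
    simp only [add_mul, mul_add, smul_mul_assoc, mul_smul_comm, Matrix.mul_one, Matrix.one_mul]
    module
  have hG3 : G * G * G = Q * Q * Q + (3 * c) • (Q * Q) + (3 * c ^ 2) • Q + c ^ 3 • 1 := by
    rw [hG]
    simp only [add_mul, mul_add, smul_mul_assoc, mul_smul_comm, Matrix.mul_one, Matrix.one_mul]
    module
  rw [hG3, hG2]
  simp only [trace_add, trace_smul, trace_one, htrQ, htrQ3, smul_eq_mul]
  ring

theorem trace_transpose_mul_self_mul_sub_smul (Y : Matrix ι κ ℝ) (a : ℝ) :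
    ((Y * Yᵀ * Y - a • Y)ᵀ * (Y * Yᵀ * Y - a • Y)).trace
      = (Y * Yᵀ * (Y * Yᵀ) * (Y * Yᵀ)).trace - 2 * a * (Y * Yᵀ * (Y * Yᵀ)).trace
        + a ^ 2 * (Y * Yᵀ).trace := by
  classical
  have hM : Y * Yᵀ * Y - a • Y = (Y * Yᵀ - a • 1) * Y := by
    rw [Matrix.sub_mul, Matrix.smul_mul, Matrix.one_mul]
  have hsymm : (Y * Yᵀ - a • 1)ᵀ = Y * Yᵀ - a • 1 := by
    simp [transpose_sub, transpose_mul]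
  rw [trace_mul_comm, hM, transpose_mul, hsymm, Matrix.mul_assoc, ← Matrix.mul_assoc Y,
    ← Matrix.mul_assoc]
  set G := Y * Yᵀ
  have : (G - a • 1) * G * (G - a • 1) = G * G * G - (2 * a) • (G * G) + a ^ 2 • G := by
    simp only [sub_mul, mul_sub, smul_mul_assoc, mul_smul_comm, Matrix.mul_one, Matrix.one_mul]
    module
  rw [this, trace_add, trace_sub, trace_smul, trace_smul, smul_eq_mul, smul_eq_mul]

theorem dotProduct_mulVec_le_of_mul_self_eq_smul {G : Matrix ι ι ℝ}
    (hG : G.IsSymm) {a : ℝ} (ha : 0 < a) (hGG : G * G = a • G) (v : ι → ℝ) :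
    v ⬝ᵥ G *ᵥ v ≤ a * (v ⬝ᵥ v) := by
  classical
  set B := a • 1 - G
  have hBB : Bᴴ * B = a • B := by
    rw [conjTranspose_eq_transpose_of_trivial]
    simp only [B, transpose_sub, transpose_smul, transpose_one, hG.eq, sub_mul, mul_sub,
      smul_mul_assoc, mul_smul_comm, Matrix.mul_one, Matrix.one_mul, hGG]
    module
  have h := (posSemidef_conjTranspose_mul_self B).dotProduct_mulVec_nonneg v
  rw [hBB, smul_mulVec, dotProduct_smul, smul_eq_mul, star_trivial] at h
  have hB : 0 ≤ v ⬝ᵥ B *ᵥ v := nonneg_of_mul_nonneg_right h ha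
  simpa [B, sub_mulVec, smul_mulVec, dotProduct_sub, dotProduct_smul] using hB

theorem mul_transpose_mul_eq_smul_of_triangle_free (Y : Matrix ι κ ℝ) {c : ℝ} (hc : 0 ≤ c)
    (hcard : 2 * Fintype.card κ ≤ Fintype.card ι) (hdiag : ∀ x, (Y * Yᵀ) x x = c)
    (htri : ∀ x y z, x ≠ y → x ≠ z → y ≠ z →
      (Y * Yᵀ) x y = 0 ∨ (Y * Yᵀ) x z = 0 ∨ (Y * Yᵀ) y z = 0) :
    Y * Yᵀ * Y = (2 * c) • Y := by
  rcases isEmpty_or_nonempty κ with hκ | hκ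
  · ext _ i
    exact isEmptyElim i
  set G := Y * Yᵀ with hG
  have hGsymm : G.IsSymm := by rw [IsSymm, transpose_mul, transpose_transpose]
  have hcycle : ∀ x y z, x ≠ y → y ≠ z → z ≠ x → G x y = 0 ∨ G y z = 0 ∨ G z x = 0 :=
    fun x y z hxy hyz hzx ↦ by
      rw [hGsymm.apply x z, or_comm (a := G y z = 0)]
      exact htri x y z hxy hzx.symm hyz
  set N : ℝ := (Fintype.card ι : ℝ)
  set k : ℝ := (Fintype.card κ : ℝ)
  have hk : 0 < k := Nat.cast_pos.mpr Fintype.card_pos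
  have hNk : 2 * k ≤ N := by simp only [k, N]; exact_mod_cast hcard
  have htr : G.trace = N * c := by
    simp only [trace, diag, hdiag, sum_const, card_univ, nsmul_eq_mul, N]
  have hrank : (N * c) ^ 2 ≤ k * (G * G).trace := htr ▸ sq_trace_mul_transpose_le Y
  rw [← sub_eq_zero, ← trace_conjTranspose_mul_self_eq_zero_iff,
    conjTranspose_eq_transpose_of_trivial]
  refine le_antisymm ?_ ?_
  · rw [trace_transpose_mul_self_mul_sub_smul, trace_cube_eq_of_triangle_free hdiag hcycle, ← hG,
      htr]
    have : k * (2 * N * c ^ 3) ≤ k * (c * (G * G).trace) :=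
      calc k * (2 * N * c ^ 3) = N * c ^ 3 * (2 * k) := by ring
        _ ≤ N * c ^ 3 * N := by gcongr
        _ = c * (N * c) ^ 2 := by ring
        _ ≤ c * (k * (G * G).trace) := by gcongr
        _ = k * (c * (G * G).trace) := by ring
    linarith [le_of_mul_le_mul_left this hk]
  · simpa only [conjTranspose_eq_transpose_of_trivial] using
      (posSemidef_conjTranspose_mul_self (G * Y - (2 * c) • Y)).trace_nonneg

theorem sum_mul_transpose_apply_le_of_triangle_free (Y : Matrix ι κ ℝ) {c : ℝ} (hc : 0 < c)
    (hcard : 2 * Fintype.card κ ≤ Fintype.card ι) (hdiag : ∀ x, (Y * Yᵀ) x x = c)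
    (htri : ∀ x y z, x ≠ y → x ≠ z → y ≠ z →
      (Y * Yᵀ) x y = 0 ∨ (Y * Yᵀ) x z = 0 ∨ (Y * Yᵀ) y z = 0) :
    ∑ x, ∑ y, (Y * Yᵀ) x y ≤ 2 * c * Fintype.card ι := by
  have hGG : Y * Yᵀ * (Y * Yᵀ) = (2 * c) • (Y * Yᵀ) := by
    rw [← Matrix.mul_assoc, mul_transpose_mul_eq_smul_of_triangle_free Y hc.le hcard hdiag htri,
      Matrix.smul_mul]
  have := dotProduct_mulVec_le_of_mul_self_eq_smul
    (by rw [IsSymm, transpose_mul, transpose_transpose]) (by positivity) hGG 1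
  rw [one_dotProduct_one, one_dotProduct] at this
  simpa only [mulVec, dotProduct_one] using this

noncomputable def augment {ι : Type*} {n : ℕ} (v : ι → EuclideanSpace ℝ (Fin n)) (t : ℝ) :
    Matrix ι (Fin (n + 1)) ℝ :=
  of fun x ↦ Fin.cons t fun i ↦ v x i

theorem augment_mul_transpose_apply {ι : Type*} {n : ℕ} (v : ι → EuclideanSpace ℝ (Fin n))
    (t : ℝ) (x y : ι) : (augment v t * (augment v t)ᵀ) x y = ⟪v x, v y⟫ + t ^ 2 := by
  rw [mul_apply, Fin.sum_univ_succ, PiLp.inner_apply, add_comm]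
  simp [augment, mul_comm, sq]

end Matrix

theorem max_obtuse_almost_equiangular_barycenter_zero (n : ℕ)
    (S : Finset (EuclideanSpace ℝ (Fin n)))
    (hunit : ∀ x ∈ S, ‖x‖ = 1)
    (halmost : ∀ x ∈ S, ∀ y ∈ S, ∀ z ∈ S, x ≠ y → x ≠ z → y ≠ z →
      ⟪x, y⟫ = -1 / n ∨ ⟪x, z⟫ = -1 / n ∨ ⟪y, z⟫ = -1 / n)
    (hcard : S.card = 2 * (n + 1)) :
    ∑ x ∈ S, x = 0 := by
  obtain ⟨x₀, hx₀⟩ : S.Nonempty := card_pos.mp (by omega)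
  have hn : (0 : ℝ) < n := by
    rcases n.eq_zero_or_pos with rfl | hn
    · simpa [Subsingleton.elim x₀ 0] using hunit x₀ hx₀
    · exact_mod_cast hn
  set Y := augment (fun x : S ↦ (x : EuclideanSpace ℝ (Fin n))) (√n)⁻¹
  have hY : ∀ x y : S, (Y * Yᵀ) x y = ⟪(x : EuclideanSpace ℝ (Fin n)), y⟫ + 1 / n := by
    intro x y
    rw [augment_mul_transpose_apply, inv_pow, Real.sq_sqrt hn.le, one_div]
  have hY0 : ∀ x y : S, ⟪(x : EuclideanSpace ℝ (Fin n)), y⟫ = -1 / n → (Y * Yᵀ) x y = 0 :=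
    fun x y h ↦ by rw [hY, h]; ring
  have key := sum_mul_transpose_apply_le_of_triangle_free Y (c := (n + 1) / n) (by positivity)
    (by simp [hcard]) (fun x ↦ by rw [hY, real_inner_self_eq_norm_sq, hunit x x.2]; field_simp)
    fun x y z hxy hxz hyz ↦ (halmost x x.2 y y.2 z z.2 (Subtype.val_injective.ne hxy)
      (Subtype.val_injective.ne hxz) (Subtype.val_injective.ne hyz)).imp (hY0 x y)
        (.imp (hY0 x z) (hY0 y z))
  have hsum : ∑ x : S, ∑ y : S, (Y * Yᵀ) x y = ‖∑ x ∈ S, x‖ ^ 2 + 4 * (n + 1) ^ 2 / n := by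
    simp only [hY, sum_add_distrib, sum_const, card_univ, Fintype.card_coe, hcard, ← sum_inner,
      ← inner_sum, sum_coe_sort S (fun x ↦ x), real_inner_self_eq_norm_sq, nsmul_eq_mul]
    push_cast
    field_simp
    ring
  have hnorm : ‖∑ x ∈ S, x‖ ^ 2 ≤ 0 := by
    rw [Fintype.card_coe, hcard] at key
    have : 2 * ((n + 1) / n) * ((2 * (n + 1) : ℕ) : ℝ) = 4 * (n + 1) ^ 2 / n := by
      push_cast; ring
    linarith
  simpa using hnorm
end

section
/- If S = {x_1, ..., x_{2(n+1)}} is a maximum obtuse almost-equiangular subset of S^{n-1}, then S is a spherical 2-design: the sum of the x_i is zero, and for every unit vector u, ∑_{k} (u·x_k)² = 2(1 + 1/n). -/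
/-!
Lift each `x k` to `y k = (x k, 1/√n) ∈ ℝⁿ⁺¹`, so that `⟪y k, y l⟫ = ⟪x k, x l⟫ + 1/n`. The
almost-equiangular condition then says that no three of the `y k` are pairwise non-orthogonal, so
the vectors not orthogonal to a given `y k` are pairwise orthogonal and Bessel's inequality bounds
each row of the Gram matrix: `∑ l ≠ k, ⟪y k, y l⟫² ≤ ‖y k‖⁴`. For `2(n+1)` vectors this upper bound
on `∑ k l, ⟪y k, y l⟫²` coincides with the Cauchy–Schwarz lower bound `(tr Φ)² / (n+1)` for the
frame operator `Φ = ∑ k, y k y kᵀ`, which forces `Φ` to be a multiple of the identity. Testing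
`Φ` against `(u, 0)` and `(0, 1)` gives both claims.
-/

open scoped RealInnerProductSpace

namespace EuclideanSpace

theorem real_inner_eq_sum_mul {ι : Type*} [Fintype ι] (a b : EuclideanSpace ℝ ι) :
    ⟪a, b⟫ = ∑ i, a i * b i := by
  simp [PiLp.inner_apply, mul_comm]

def snoc {n : ℕ} (v : EuclideanSpace ℝ (Fin n)) (t : ℝ) : EuclideanSpace ℝ (Fin (n + 1)) :=
  WithLp.toLp 2 (Fin.snoc v.ofLp t)

theorem inner_snoc_snoc {n : ℕ} (a b : EuclideanSpace ℝ (Fin n)) (s t : ℝ) :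
    ⟪snoc a s, snoc b t⟫ = ⟪a, b⟫ + s * t := by
  simp [snoc, PiLp.inner_apply, Fin.sum_univ_castSucc, mul_comm]

end EuclideanSpace

open EuclideanSpace

section InnerProductSpace

variable {E κ : Type*} [NormedAddCommGroup E] [InnerProductSpace ℝ E]

theorem sum_inner_sq_le_of_pairwise_orthogonal {v : κ → E} {s : Finset κ} {r : ℝ}
    (horth : (s : Set κ).Pairwise fun l l' => ⟪v l, v l'⟫ = 0)
    (hnorm : ∀ l ∈ s, ‖v l‖ = r) (w : E) :
    ∑ l ∈ s, ⟪v l, w⟫ ^ 2 ≤ (r * ‖w‖) ^ 2 := by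
  rcases eq_or_ne r 0 with rfl | hr
  · have hv : ∀ l ∈ s, v l = 0 := fun l hl => norm_eq_zero.mp (hnorm l hl)
    simp +contextual [hv]
  have hon : Orthonormal ℝ fun l : s => r⁻¹ • v l := by
    refine ⟨fun l => ?_, fun a b hab => ?_⟩
    · rw [norm_smul, hnorm l l.2, norm_inv, Real.norm_eq_abs,
        abs_of_nonneg (hnorm l l.2 ▸ norm_nonneg _)]
      field_simp
    · dsimp only
      rw [real_inner_smul_left, real_inner_smul_right, horth a.2 b.2 (Subtype.coe_ne_coe.mpr hab),
        mul_zero, mul_zero]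
  have hbessel := hon.sum_inner_products_le (s := Finset.univ) (x := w)
  simp only [real_inner_smul_left, Real.norm_eq_abs, sq_abs, mul_pow] at hbessel
  rw [← Finset.mul_sum, Finset.sum_coe_sort s (fun l => ⟪v l, w⟫ ^ 2)] at hbessel
  calc ∑ l ∈ s, ⟪v l, w⟫ ^ 2 = r ^ 2 * (r⁻¹ ^ 2 * ∑ l ∈ s, ⟪v l, w⟫ ^ 2) := by
        field_simp
    _ ≤ (r * ‖w‖) ^ 2 := by rw [mul_pow]; gcongr

def NonorthogonalityTriangleFree (y : κ → E) : Prop :=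
  ∀ k l l', k ≠ l → k ≠ l' → l ≠ l' → ⟪y k, y l⟫ ≠ 0 → ⟪y k, y l'⟫ ≠ 0 → ⟪y l, y l'⟫ = 0

namespace NonorthogonalityTriangleFree

variable [Fintype κ] {y : κ → E} {r : ℝ}

theorem sum_inner_sq_le (hy : NonorthogonalityTriangleFree y) (hnorm : ∀ k, ‖y k‖ = r)
    (k : κ) : ∑ l, ⟪y k, y l⟫ ^ 2 ≤ 2 * r ^ 4 := by
  classical
  set S := (Finset.univ.erase k).filter fun l => ⟪y k, y l⟫ ^ 2 ≠ 0
  have hS : ∀ l ∈ S, l ≠ k ∧ ⟪y k, y l⟫ ≠ 0 := fun l hl => by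
    simp only [S, Finset.mem_filter, Finset.mem_erase, ne_eq, pow_eq_zero_iff two_ne_zero] at hl
    exact ⟨hl.1.1, hl.2⟩
  have hbessel : ∑ l ∈ S, ⟪y l, y k⟫ ^ 2 ≤ (r * ‖y k‖) ^ 2 :=
    sum_inner_sq_le_of_pairwise_orthogonal (fun l hl l' hl' hll' =>
      hy k l l' (hS l hl).1.symm (hS l' hl').1.symm hll' (hS l hl).2 (hS l' hl').2)
      (fun l _ => hnorm l) (y k)
  rw [← Finset.add_sum_erase _ _ (Finset.mem_univ k), ← Finset.sum_filter_ne_zero,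
    real_inner_self_eq_norm_sq, hnorm]
  simp only [real_inner_comm (y k), hnorm k] at hbessel
  linarith

theorem sum_sum_inner_sq_le (hy : NonorthogonalityTriangleFree y) (hnorm : ∀ k, ‖y k‖ = r) :
    ∑ k, ∑ l, ⟪y k, y l⟫ ^ 2 ≤ Fintype.card κ * (2 * r ^ 4) := by
  simpa using Finset.sum_le_sum fun k (_ : k ∈ Finset.univ) => hy.sum_inner_sq_le hnorm k

end NonorthogonalityTriangleFree

end InnerProductSpace

theorem Matrix.eq_smul_one_of_sum_sq_le {ι : Type*} [Fintype ι] [DecidableEq ι]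
    (A : Matrix ι ι ℝ) (h : ∑ i, ∑ j, A i j ^ 2 ≤ A.trace ^ 2 / Fintype.card ι) :
    A = (A.trace / Fintype.card ι) • 1 := by
  cases isEmpty_or_nonempty ι
  · exact Subsingleton.elim _ _
  set c := A.trace / Fintype.card ι
  have hrow : ∀ i, ∑ j, (A i j - (c • 1 : Matrix ι ι ℝ) i j) ^ 2
      = ∑ j, A i j ^ 2 - 2 * c * A i i + c ^ 2 := fun i => by
    simp only [Matrix.smul_apply, Matrix.one_apply, smul_eq_mul, mul_ite, mul_one, mul_zero, sub_sq,
      ite_pow, ne_eq, OfNat.ofNat_ne_zero, not_false_eq_true, zero_pow, Finset.sum_add_distrib,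
      Finset.sum_sub_distrib, Finset.sum_ite_eq, Finset.mem_univ, ↓reduceIte]
    ring
  have hdev : ∑ i, ∑ j, (A i j - (c • 1 : Matrix ι ι ℝ) i j) ^ 2 ≤ 0 := by
    have hd : (0 : ℝ) < Fintype.card ι := by exact_mod_cast Fintype.card_pos
    have hc : 2 * c * A.trace - Fintype.card ι * c ^ 2 = A.trace ^ 2 / Fintype.card ι := by
      simp only [c]; field_simp; ring
    simp only [hrow, Finset.sum_add_distrib, Finset.sum_sub_distrib, ← Finset.mul_sum,
      Finset.sum_const, Finset.card_univ, nsmul_eq_mul]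
    change _ - 2 * c * A.trace + _ ≤ 0
    linarith
  ext i j
  have hsq := (Finset.sum_eq_zero_iff_of_nonneg fun _ _ => Finset.sum_nonneg fun _ _ => sq_nonneg _).1
    (le_antisymm hdev (Finset.sum_nonneg fun _ _ => Finset.sum_nonneg fun _ _ => sq_nonneg _)) i
    (Finset.mem_univ i)
  rw [Finset.sum_eq_zero_iff_of_nonneg fun _ _ => sq_nonneg _] at hsq
  exact sub_eq_zero.1 (pow_eq_zero_iff two_ne_zero |>.1 (hsq j (Finset.mem_univ j)))

section Frame

variable {ι κ : Type*} [Fintype ι] [Fintype κ]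

def frameMatrix (y : κ → EuclideanSpace ℝ ι) : Matrix ι ι ℝ :=
  Matrix.of fun i j => ∑ k, y k i * y k j

variable (y : κ → EuclideanSpace ℝ ι)

theorem trace_frameMatrix : (frameMatrix y).trace = ∑ k, ‖y k‖ ^ 2 := by
  simp only [Matrix.trace, Matrix.diag, frameMatrix, Matrix.of_apply, ← real_inner_self_eq_norm_sq,
    real_inner_eq_sum_mul]
  exact Finset.sum_comm

theorem sum_sq_frameMatrix : ∑ i, ∑ j, frameMatrix y i j ^ 2 = ∑ k, ∑ l, ⟪y k, y l⟫ ^ 2 := by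
  simp only [frameMatrix, Matrix.of_apply, real_inner_eq_sum_mul, sq, Finset.sum_mul_sum,
    ← Finset.sum_product']
  exact Finset.sum_nbij' (fun x => (x.2.2.1, x.2.2.2, x.1, x.2.1))
    (fun x => (x.2.2.1, x.2.2.2, x.1, x.2.1)) (by simp) (by simp) (by simp) (by simp)
    (by simp [mul_mul_mul_comm])

theorem sum_inner_mul_inner_of_frameMatrix_eq [DecidableEq ι] {c : ℝ} (h : frameMatrix y = c • 1)
    (u w : EuclideanSpace ℝ ι) : ∑ k, ⟪u, y k⟫ * ⟪w, y k⟫ = c * ⟪u, w⟫ := by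
  have hentry : ∀ i j, ∑ k, y k i * y k j = c * (1 : Matrix ι ι ℝ) i j := fun i j => by
    simpa [frameMatrix] using congrFun (congrFun h i) j
  calc ∑ k, ⟪u, y k⟫ * ⟪w, y k⟫ = ∑ i, ∑ j, u i * w j * ∑ k, y k i * y k j := by
        simp only [real_inner_eq_sum_mul, Finset.sum_mul_sum]
        simp only [Finset.mul_sum]
        exact Finset.sum_comm.trans <| Finset.sum_congr rfl fun i _ => Finset.sum_comm.trans <|
          Finset.sum_congr rfl fun j _ => Finset.sum_congr rfl fun k _ => by ring
    _ = c * ⟪u, w⟫ := by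
        simp [hentry, Matrix.one_apply, real_inner_eq_sum_mul, Finset.mul_sum, mul_comm]

theorem sum_inner_mul_inner_eq_of_sum_sq_inner_le
    (h : ∑ k, ∑ l, ⟪y k, y l⟫ ^ 2 ≤ (∑ k, ‖y k‖ ^ 2) ^ 2 / Fintype.card ι)
    (u w : EuclideanSpace ℝ ι) :
    ∑ k, ⟪u, y k⟫ * ⟪w, y k⟫ = (∑ k, ‖y k‖ ^ 2) / Fintype.card ι * ⟪u, w⟫ := by
  classical
  refine sum_inner_mul_inner_of_frameMatrix_eq y ?_ u w
  rw [← trace_frameMatrix]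
  exact (frameMatrix y).eq_smul_one_of_sum_sq_le (by rwa [sum_sq_frameMatrix, trace_frameMatrix])

theorem NonorthogonalityTriangleFree.sum_inner_mul_inner_eq {y : κ → EuclideanSpace ℝ ι} {r : ℝ}
    (hy : NonorthogonalityTriangleFree y) (hcard : Fintype.card κ = 2 * Fintype.card ι)
    (hnorm : ∀ k, ‖y k‖ = r) (u w : EuclideanSpace ℝ ι) :
    ∑ k, ⟪u, y k⟫ * ⟪w, y k⟫ = 2 * r ^ 2 * ⟪u, w⟫ := by
  cases isEmpty_or_nonempty ι
  · simp [Subsingleton.elim u 0]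
  have hd : (Fintype.card ι : ℝ) ≠ 0 := by exact_mod_cast Fintype.card_ne_zero
  have hsum : ∑ k, ‖y k‖ ^ 2 = 2 * Fintype.card ι * r ^ 2 := by
    simp [hnorm, hcard]
  rw [sum_inner_mul_inner_eq_of_sum_sq_inner_le y _ u w, hsum]
  · field_simp
  · rw [hsum]
    calc _ ≤ Fintype.card κ * (2 * r ^ 4) := hy.sum_sum_inner_sq_le hnorm
      _ = _ := by rw [hcard]; push_cast; field_simp

end Frame

theorem max_obtuse_almost_equiangular_two_design_general (n : ℕ)
    (x : Fin (2 * (n + 1)) → EuclideanSpace ℝ (Fin n))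
    (hunit : ∀ i, ‖x i‖ = 1)
    (halmost : ∀ i j k : Fin (2 * (n + 1)), i ≠ j → i ≠ k → j ≠ k →
      ⟪x i, x j⟫ = -1 / n ∨ ⟪x i, x k⟫ = -1 / n ∨ ⟪x j, x k⟫ = -1 / n) :
    (∑ i, x i = 0) ∧
      ∀ u : EuclideanSpace ℝ (Fin n), ‖u‖ = 1 →
        ∑ k, ⟪u, x k⟫ ^ 2 = 2 * (1 + 1 / n) := by
  have hn : (n : ℝ) ≠ 0 := by
    rintro hn
    rw [Nat.cast_eq_zero] at hn
    subst hn
    simpa [Subsingleton.elim (x 0) 0] using hunit 0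
  set t := √(1 / n)
  have ht : t * t = 1 / n := Real.mul_self_sqrt (by positivity)
  set y := fun k => snoc (x k) t
  have hyy : ∀ k l, ⟪y k, y l⟫ = ⟪x k, x l⟫ + 1 / n := fun k l => by
    simp only [y, inner_snoc_snoc, ht]
  have hy : NonorthogonalityTriangleFree y := fun k l l' hkl hkl' hll' h h' => by
    simp only [hyy, ne_eq, ← eq_neg_iff_add_eq_zero, ← neg_div] at h h' ⊢
    exact (halmost k l l' hkl hkl' hll').resolve_left h |>.resolve_left h'
  have hframe := hy.sum_inner_mul_inner_eq (r := √(1 + 1 / n)) (by simp) fun k => by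
    rw [norm_eq_sqrt_real_inner, hyy, real_inner_self_eq_norm_sq, hunit]; norm_num
  have hr : √(1 + 1 / n : ℝ) ^ 2 = 1 + 1 / n := Real.sq_sqrt (by positivity)
  refine ⟨ext_inner_left ℝ fun u => ?_, fun u hu => ?_⟩
  · have hperp := hframe (snoc u 0) (snoc 0 1)
    simp only [y, inner_snoc_snoc, inner_zero_left, inner_zero_right, zero_mul, one_mul, add_zero,
      zero_add, mul_zero, ← Finset.sum_mul] at hperp
    rw [inner_sum, inner_zero_right]
    exact (mul_eq_zero.1 hperp).resolve_right (Real.sqrt_ne_zero'.2 (by positivity))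
  · have hsq := hframe (snoc u 0) (snoc u 0)
    simp only [y, inner_snoc_snoc, zero_mul, add_zero, ← sq] at hsq
    rw [real_inner_self_eq_norm_sq, hu, hr] at hsq
    simpa using hsq

theorem max_obtuse_almost_equiangular_two_design (n : ℕ)
    (x : Fin (2 * (n + 1)) → EuclideanSpace ℝ (Fin n))
    (hinj : Function.Injective x)
    (hunit : ∀ i, ‖x i‖ = 1)
    (halmost : ∀ i j k : Fin (2 * (n + 1)), i ≠ j → i ≠ k → j ≠ k →
      ⟪x i, x j⟫ = -1 / n ∨ ⟪x i, x k⟫ = -1 / n ∨ ⟪x j, x k⟫ = -1 / n) :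
    (∑ i, x i = 0) ∧
      ∀ u : EuclideanSpace ℝ (Fin n), ‖u‖ = 1 →
        ∑ k, ⟪u, x k⟫ ^ 2 = 2 * (1 + 1 / n) :=
  max_obtuse_almost_equiangular_two_design_general n x hunit halmost
end

section
/- Let S be a maximum obtuse almost-equiangular subset of S^{n-1} with Gram matrix U, and let O = (1+1/n)^{-1}(U + (1/n)J - (1+1/n)I), where J is the all-ones matrix and I the identity. Then O is symmetric, O² = I, O·e = e for the all-ones vector e, O_{ii} = 0 for all i, and O_{ij}O_{jk}O_{ki} = 0 for all i, j, k. -/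
open scoped RealInnerProductSpace
open Matrix

/-!
The vectors `(√(n/(n+1)) xᵢ, 1/√(n+1)) ∈ ℝⁿ⁺¹` have Gram matrix `1 + O`, so `1 + O = Bᵀ B` for
an `(n+1) × 2(n+1)` matrix `B` whose last row is constant. Since `O` has zero diagonal and no
"triangles", testing positivity of `1 + O` on `eᵢ - O eᵢ` shows that each row of `O` has norm at
most `1`. Hence `tr ((B Bᵀ)²) = tr ((1 + O)²) ≤ 4(n+1)` while `tr (B Bᵀ) = 2(n+1)`, so
`tr ((B Bᵀ - 2)²) ≤ 0` and `B Bᵀ = 2`. Then `(1 + O)² = 2 (1 + O)`, i.e. `O² = 1`, and the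
constant last row of `B` gives `(1 + O) e = 2 e`.
-/

namespace Matrix

variable {κ ι : Type*}

theorem mul_triangle_eq_zero {O : Matrix ι ι ℝ} (hO : O.IsSymm) (hdiag : ∀ i, O i i = 0)
    (h : ∀ i j k, i ≠ j → i ≠ k → j ≠ k → O i j = 0 ∨ O i k = 0 ∨ O j k = 0) (i j k : ι) :
    O i j * O j k * O k i = 0 := by
  rcases eq_or_ne i j with rfl | hij
  · simp [hdiag]
  rcases eq_or_ne i k with rfl | hik
  · simp [hdiag]
  rcases eq_or_ne j k with rfl | hjk
  · simp [hdiag]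
  rcases h i j k hij hik hjk with h | h | h
  · simp [h]
  · simp [hO.apply i k, h]
  · simp [h]

variable [Fintype κ]

theorem exists_transpose_mul_eq_smul_add_ones {m : ℝ} (hm : 0 ≤ m) (X : Matrix κ ι ℝ) :
    ∃ B : Matrix (κ ⊕ Unit) ι ℝ, Bᵀ * B = (m + 1)⁻¹ • (m • (Xᵀ * X) + of fun _ _ => 1) ∧
      ∀ j, B (Sum.inr ()) j = (√(m + 1))⁻¹ := by
  refine ⟨(√(m + 1))⁻¹ • fromRows (√m • X) (of fun _ _ => 1), ?_, fun j => by simp⟩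
  rw [transpose_smul, Matrix.smul_mul, Matrix.mul_smul, smul_smul, transpose_fromRows,
    fromCols_mul_fromRows, transpose_smul, Matrix.smul_mul, Matrix.mul_smul, smul_smul,
    ← mul_inv, Real.mul_self_sqrt (by linarith), Real.mul_self_sqrt hm]
  congr 2
  ext i j
  simp [mul_apply]

variable [DecidableEq κ]

theorem eq_smul_one_of_trace_mul_self_le {Q : Matrix κ κ ℝ} (hQ : Q.IsSymm) {a : ℝ}
    (htr : Q.trace = a * Fintype.card κ) (htr2 : (Q * Q).trace ≤ a ^ 2 * Fintype.card κ) :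
    Q = a • 1 := by
  set R := Q - a • 1
  have hR : Rᴴ = R := by
    rw [conjTranspose_eq_transpose_of_trivial, transpose_sub, transpose_smul, transpose_one, hQ.eq]
  have hRR : (Rᴴ * R).trace = (Q * Q).trace - 2 * a * Q.trace + a ^ 2 * Fintype.card κ := by
    simp only [hR, R, sub_mul, mul_sub, Matrix.smul_mul, Matrix.mul_smul, one_mul, mul_one,
      smul_smul, trace_sub, trace_smul, trace_one, smul_eq_mul]
    ring
  have hR0 : (Rᴴ * R).trace = 0 :=
    le_antisymm (by rw [hRR, htr]; nlinarith) (posSemidef_conjTranspose_mul_self R).trace_nonneg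
  exact sub_eq_zero.mp (trace_conjTranspose_mul_self_eq_zero_iff.mp hR0)

variable [Fintype ι]

theorem transpose_mul_mulVec_const_of_mul_transpose_eq {B : Matrix κ ι ℝ} {a s : ℝ}
    (hBB : B * Bᵀ = a • 1) {r : κ} (hs : s ≠ 0) (hr : ∀ j, B r j = s) :
    (Bᵀ * B) *ᵥ (fun _ => 1) = fun _ => a := by
  have hBe : B *ᵥ (fun _ => 1) = (a / s) • Pi.single r 1 := by
    ext q
    have := congrFun (congrFun hBB q) r
    simp only [mul_apply, transpose_apply, hr, ← Finset.sum_mul, smul_apply, one_apply,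
      smul_eq_mul] at this
    simp only [mulVec, dotProduct, mul_one, Pi.smul_apply, Pi.single_apply, smul_eq_mul]
    field_simp
    rw [this]
  ext j
  rw [← mulVec_mulVec, hBe, mulVec_smul, mulVec_single_one]
  simp [hr, hs]

variable [DecidableEq ι] {O : Matrix ι ι ℝ}

omit [Fintype ι] in
theorem isSymm_of_posSemidef_one_add (hP : (1 + O).PosSemidef) : O.IsSymm := by
  simpa [IsSymm, conjTranspose_eq_transpose_of_trivial] using hP.1

omit [DecidableEq κ] in
theorem posSemidef_one_add_of_transpose_mul_eq {B : Matrix κ ι ℝ} (hB : Bᵀ * B = 1 + O) :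
    (1 + O).PosSemidef := by
  simpa [hB, conjTranspose_eq_transpose_of_trivial] using posSemidef_conjTranspose_mul_self B

variable (hdiag : ∀ i, O i i = 0) (htri : ∀ i j k, O i j * O j k * O k i = 0)
include hdiag htri

theorem sum_sq_row_le_one (hP : (1 + O).PosSemidef) (i : ι) : ∑ j, O i j ^ 2 ≤ 1 := by
  have hO := isSymm_of_posSemidef_one_add hP
  set v : ι → ℝ := O i
  -- the quadratic form of `1 + O` at `w` is `1 - ∑ j, O i j ^ 2`
  set w : ι → ℝ := Pi.single i 1 - v
  have hOv : (O *ᵥ v) i = ∑ j, O i j ^ 2 := by simp [mulVec, dotProduct, v, sq]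
  have hvOv : v ⬝ᵥ (O *ᵥ v) = 0 := by
    refine Finset.sum_eq_zero fun j _ => ?_
    simp only [mulVec, dotProduct, Finset.mul_sum, v]
    refine Finset.sum_eq_zero fun k _ => ?_
    rw [hO.apply k i]
    linear_combination htri i j k
  have hPw : (1 + O) *ᵥ w = Pi.single i 1 - O *ᵥ v := by
    have : O *ᵥ Pi.single i 1 = v := by
      ext j; simp [v, hO.apply i j]
    simp only [w, add_mulVec, one_mulVec, mulVec_sub, this]
    abel
  have := hP.dotProduct_mulVec_nonneg w
  rw [star_trivial, hPw] at this
  simp only [w, sub_dotProduct, dotProduct_sub, single_dotProduct, dotProduct_single, hOv,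
    hvOv] at this
  simp [v, hdiag] at this
  linarith

theorem trace_mul_self_le_card (hP : (1 + O).PosSemidef) : (O * O).trace ≤ Fintype.card ι := by
  have hO := isSymm_of_posSemidef_one_add hP
  calc (O * O).trace = ∑ i, ∑ j, O i j ^ 2 := by
        simp only [trace, diag, mul_apply, hO.apply _ _, sq]
    _ ≤ ∑ _i : ι, (1 : ℝ) := Finset.sum_le_sum fun i _ => sum_sq_row_le_one hdiag htri hP i
    _ = Fintype.card ι := by simp

variable {B : Matrix κ ι ℝ} (hB : Bᵀ * B = 1 + O)
include hB

theorem mul_transpose_eq_two_smul_one (hcard : Fintype.card ι = 2 * Fintype.card κ) :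
    B * Bᵀ = (2 : ℝ) • 1 := by
  have hP := posSemidef_one_add_of_transpose_mul_eq hB
  have hOtr : O.trace = 0 := Finset.sum_eq_zero fun i _ => hdiag i
  refine eq_smul_one_of_trace_mul_self_le (Q := B * Bᵀ) (by simp [IsSymm]) ?_ ?_
  · rw [trace_mul_comm, hB, trace_add, trace_one, hOtr, hcard]
    push_cast
    ring
  · have : (B * Bᵀ * (B * Bᵀ)).trace = ((Bᵀ * B) * (Bᵀ * B)).trace := by
      rw [Matrix.mul_assoc, trace_mul_comm, Matrix.mul_assoc, Matrix.mul_assoc, Matrix.mul_assoc]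
    rw [this, hB, add_mul, mul_add, mul_add, one_mul, mul_one, one_mul, trace_add, trace_add,
      trace_add, trace_one, hOtr]
    have := trace_mul_self_le_card hdiag htri hP
    rw [hcard] at this ⊢
    push_cast at this ⊢
    linarith

theorem mul_self_eq_one_of_transpose_mul_eq (hcard : Fintype.card ι = 2 * Fintype.card κ) :
    O * O = 1 := by
  have hsq : (1 + O) * (1 + O) = (2 : ℝ) • (1 + O) := by
    rw [← hB, Matrix.mul_assoc, ← Matrix.mul_assoc B,
      mul_transpose_eq_two_smul_one hdiag htri hB hcard, Matrix.smul_mul, Matrix.one_mul,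
      Matrix.mul_smul]
  rw [add_mul, mul_add, mul_add, one_mul, mul_one, one_mul, two_smul] at hsq
  exact add_left_cancel (a := O) (by simpa [add_assoc, add_comm] using hsq)

end Matrix

theorem max_obtuse_almost_equiangular_orthogonal_matrix_general (n : ℕ)
    (x : Fin (2 * (n + 1)) → EuclideanSpace ℝ (Fin n))
    (hunit : ∀ i, ‖x i‖ = 1)
    (halmost : ∀ i j k : Fin (2 * (n + 1)), i ≠ j → i ≠ k → j ≠ k →
      ⟪x i, x j⟫ = -1 / n ∨ ⟪x i, x k⟫ = -1 / n ∨ ⟪x j, x k⟫ = -1 / n)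
    (U O J : Matrix (Fin (2 * (n + 1))) (Fin (2 * (n + 1))) ℝ)
    (hU : ∀ i j, U i j = ⟪x i, x j⟫)
    (hJ : ∀ i j, J i j = 1)
    (hO : O = (1 + 1 / (n : ℝ))⁻¹ • (U + (1 / (n : ℝ)) • J - (1 + 1 / (n : ℝ)) • 1)) :
    O.IsSymm ∧ O * O = 1 ∧ O.mulVec (fun _ => 1) = (fun _ => 1) ∧
      (∀ i, O i i = 0) ∧ ∀ i j k, O i j * O j k * O k i = 0 := by
  have hn : n ≠ 0 := by
    rintro rfl
    simpa [Subsingleton.elim (x 0) 0] using hunit 0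
  have hP : 1 + O = ((n : ℝ) + 1)⁻¹ • ((n : ℝ) • gram ℝ x + of fun _ _ => 1) := by
    ext i j
    simp [hO, hJ, hU, one_apply]
    split_ifs <;> field_simp <;> ring
  have hentry i j : (1 + O) i j = ((n : ℝ) + 1)⁻¹ * (n * ⟪x i, x j⟫ + 1) := by
    rw [hP]
    simp [gram_apply]
  have hdiag i : O i i = 0 := by
    simpa [hunit, inv_mul_cancel₀ (by positivity : (n : ℝ) + 1 ≠ 0)] using hentry i i
  have hzero {i j} (hij : i ≠ j) (h : ⟪x i, x j⟫ = -1 / n) : O i j = 0 := by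
    simpa [h, hij, neg_div, hn] using hentry i j
  obtain ⟨B, hB, hlast⟩ := exists_transpose_mul_eq_smul_add_ones n.cast_nonneg
    (of fun r j => (EuclideanSpace.basisFun (Fin n) ℝ).repr (x j) r)
  rw [← conjTranspose_eq_transpose_of_trivial (of _), ← gram_eq_conjTranspose_mul, ← hP] at hB
  have hsymm := isSymm_of_posSemidef_one_add (posSemidef_one_add_of_transpose_mul_eq hB)
  have htri := mul_triangle_eq_zero hsymm hdiag fun i j k hij hik hjk =>
    (halmost i j k hij hik hjk).imp (hzero hij) (Or.imp (hzero hik) (hzero hjk))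
  have hcard : Fintype.card (Fin (2 * (n + 1))) = 2 * Fintype.card (Fin n ⊕ Unit) := by simp
  refine ⟨hsymm, mul_self_eq_one_of_transpose_mul_eq hdiag htri hB hcard, ?_, hdiag, htri⟩
  have := transpose_mul_mulVec_const_of_mul_transpose_eq
    (mul_transpose_eq_two_smul_one hdiag htri hB hcard) (by positivity) hlast
  rw [hB, add_mulVec, one_mulVec] at this
  ext i
  linarith [show 1 + (O *ᵥ fun _ => 1) i = 2 from congrFun this i]

theorem max_obtuse_almost_equiangular_orthogonal_matrix (n : ℕ)
    (x : Fin (2 * (n + 1)) → EuclideanSpace ℝ (Fin n))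
    (hinj : Function.Injective x)
    (hunit : ∀ i, ‖x i‖ = 1)
    (halmost : ∀ i j k : Fin (2 * (n + 1)), i ≠ j → i ≠ k → j ≠ k →
      ⟪x i, x j⟫ = -1 / n ∨ ⟪x i, x k⟫ = -1 / n ∨ ⟪x j, x k⟫ = -1 / n)
    (U O J : Matrix (Fin (2 * (n + 1))) (Fin (2 * (n + 1))) ℝ)
    (hU : ∀ i j, U i j = ⟪x i, x j⟫)
    (hJ : ∀ i j, J i j = 1)
    (hO : O = (1 + 1 / (n : ℝ))⁻¹ • (U + (1 / (n : ℝ)) • J - (1 + 1 / (n : ℝ)) • 1)) :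
    O.IsSymm ∧ O * O = 1 ∧ O.mulVec (fun _ => 1) = (fun _ => 1) ∧
      (∀ i, O i i = 0) ∧ ∀ i j k, O i j * O j k * O k i = 0 :=
  max_obtuse_almost_equiangular_orthogonal_matrix_general n x hunit halmost U O J hU hJ hO
end

section
/- Let O be a 2(n+1) × 2(n+1) real symmetric orthogonal matrix with Oe = e (e the all-ones vector), O_{ii} = 0 for all i, and O_{ij}O_{jk}O_{ki} = 0 for all i, j, k. Then U := (1+1/n)O - (1/n)J + (1+1/n)I is positive semidefinite of rank n with all diagonal entries equal to 1, and for all distinct i, j, k, at least one of U_{ij}, U_{jk}, U_{ki} equals -1/n. -/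
open Matrix in
theorem orthogonal_matrix_gives_gram (n : ℕ) (hn : 1 ≤ n)
    (O J U : Matrix (Fin (2 * (n + 1))) (Fin (2 * (n + 1))) ℝ)
    (hsymm : O.IsSymm) (horth : O * O = 1)
    (hOe : O.mulVec (fun _ => 1) = (fun _ => 1))
    (hdiag : ∀ i, O i i = 0)
    (htriple : ∀ i j k, O i j * O j k * O k i = 0)
    (hJ : ∀ i j, J i j = 1)
    (hU : U = (1 + 1 / (n : ℝ)) • O - (1 / (n : ℝ)) • J + (1 + 1 / (n : ℝ)) • 1) :
    U.PosSemidef ∧ U.rank = n ∧ (∀ i, U i i = 1) ∧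
      ∀ i j k : Fin (2 * (n + 1)), i ≠ j → i ≠ k → j ≠ k →
        U i j = -1 / n ∨ U j k = -1 / n ∨ U k i = -1 / n := by
  have hn0 : (n : ℝ) ≠ 0 := Nat.cast_ne_zero.mpr (by omega)
  have hN0 : (2 * ((n : ℝ) + 1)) ≠ 0 := by positivity
  obtain ⟨M, hMdef⟩ : ∃ M : Matrix (Fin (2 * (n + 1))) (Fin (2 * (n + 1))) ℝ,
      M = (1/2 : ℝ) • O + (1/2 : ℝ) • 1 - (1 / (2 * ((n : ℝ) + 1))) • J := ⟨_, rfl⟩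
  -- basic product facts
  have hrow : ∀ i, ∑ k, O i k = 1 := by
    intro i
    have := congrFun hOe i
    simpa [Matrix.mulVec, dotProduct] using this
  have hOJ : O * J = J := by
    ext i j
    simp [Matrix.mul_apply, hJ, hrow i]
  have hJO : J * O = J := by
    ext i j
    have : ∀ k, O k j = O j k := fun k => by
      conv_lhs => rw [← hsymm]
      rfl
    simp [Matrix.mul_apply, hJ, this, hrow j]
  have hJJ : J * J = (2 * ((n : ℝ) + 1)) • J := by
    ext i j
    simp [Matrix.mul_apply, hJ, Finset.sum_const, Finset.card_univ]
  have hM2 : M * M = M := by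
    rw [hMdef]
    simp only [sub_mul, mul_sub, add_mul, mul_add, smul_mul_assoc, mul_smul_comm,
      horth, hOJ, hJO, hJJ, mul_one, one_mul, smul_smul]
    match_scalars <;> field_simp <;> ring
  have hMsymm : Mᵀ = M := by
    have hJT : Jᵀ = J := by ext i j; simp [Matrix.transpose_apply, hJ]
    rw [hMdef]
    simp [Matrix.transpose_add, Matrix.transpose_sub, Matrix.transpose_smul, hsymm.eq, hJT]
  have hUM : U = ((2 * ((n : ℝ) + 1)) / n) • M := by
    rw [hU, hMdef]
    match_scalars <;> field_simp <;> ring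
  have hc0 : (0 : ℝ) ≤ (2 * ((n : ℝ) + 1)) / n := by positivity
  have hcne : ((2 * ((n : ℝ) + 1)) / n) ≠ 0 := by positivity
  -- positive semidefiniteness
  have hpsd : U.PosSemidef := by
    have key : U = (Real.sqrt ((2 * ((n : ℝ) + 1)) / n) • M)ᴴ *
        (Real.sqrt ((2 * ((n : ℝ) + 1)) / n) • M) := by
      rw [Matrix.conjTranspose_smul]
      have hMH : Mᴴ = M := by
        ext i j
        simpa [Matrix.conjTranspose_apply] using congrFun (congrFun hMsymm i) j
      rw [hMH]
      rw [Matrix.smul_mul, Matrix.mul_smul, hM2, smul_smul]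
      rw [hUM]
      congr 1
      simpa using (Real.mul_self_sqrt hc0).symm
    rw [key]
    exact Matrix.posSemidef_conjTranspose_mul_self _
  -- rank
  have hrank : U.rank = n := by
    have hrUM : U.rank = M.rank := by
      have h1 : U = (((2 * ((n : ℝ) + 1)) / n) • (1 : Matrix _ _ ℝ)) * M := by
        rw [Matrix.smul_mul, one_mul, hUM]
      rw [h1]
      apply Matrix.rank_mul_eq_right_of_isUnit_det
      simp only [Matrix.det_smul, Matrix.det_one, mul_one, isUnit_iff_ne_zero]
      exact pow_ne_zero _ hcne
    have hff : M.mulVecLin ∘ₗ M.mulVecLin = M.mulVecLin := by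
      rw [← Matrix.mulVecLin_mul, hM2]
    have hproj : LinearMap.IsProj (LinearMap.range M.mulVecLin) M.mulVecLin := by
      refine ⟨fun x => LinearMap.mem_range_self _ x, ?_⟩
      rintro x ⟨y, rfl⟩
      exact LinearMap.congr_fun hff y
    have ht := hproj.trace
    have ht2 : LinearMap.trace ℝ _ M.mulVecLin = Matrix.trace M := by
      rw [LinearMap.trace_eq_matrix_trace ℝ (Pi.basisFun ℝ _), LinearMap.toMatrix_eq_toMatrix']
      congr 1
      rw [← Matrix.toLin'_apply' M, LinearMap.toMatrix'_toLin']
    have htr : Matrix.trace M = (n : ℝ) := by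
      rw [hMdef]
      simp [Matrix.trace, Matrix.diag, hdiag, hJ, Finset.sum_const, Finset.card_univ]
      field_simp
      ring
    have hfin : ((Module.finrank ℝ ↥(LinearMap.range M.mulVecLin)) : ℝ) = (n : ℝ) := by
      rw [← ht, ht2, htr]
    rw [hrUM, Matrix.rank]
    exact_mod_cast hfin
  refine ⟨hpsd, hrank, ?_, ?_⟩
  · intro i
    rw [hU]
    simp [hdiag, hJ, Matrix.one_apply_eq]
  · intro i j k hij hik hjk
    have h3 := htriple i j k
    have hkey : ∀ a b : Fin (2 * (n + 1)), a ≠ b → O a b = 0 → U a b = -1 / n := by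
      intro a b hab h0
      rw [hU]
      simp [h0, hJ, Matrix.one_apply_ne hab]
      ring
    rcases mul_eq_zero.mp h3 with h | h
    · rcases mul_eq_zero.mp h with h | h
      · exact Or.inl (hkey i j hij h)
      · exact Or.inr (Or.inl (hkey j k hjk h))
    · exact Or.inr (Or.inr (hkey k i (Ne.symm hik) h))
end

section
/- The k-rhombus (the complete graph K_{k+2} minus one edge) is (n,t)-realizable if and only if k ≤ n-1 and -1/k < t < 1. Moreover in any such realization, if k = n-1 then the inner product of the two nonadjacent vertices equals 2kt²/((k-1)t+1) - 1. -/
/-!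
Write a rhombus realization as two apexes `a ≠ b` over a `k`-clique `v` of unit vectors, all
pairwise inner products being `t`. For `m` such vectors the Gram form is
`(1 - t) ∑ gᵢ² + t (∑ gᵢ)²`. Hence `t < 1` (distinct unit vectors) and `1 + k t ≥ 0`, because
`‖a + ∑ v‖² = (k + 1)(1 + k t)`; equality would give `a = -∑ v = b`. So the Gram form of the
clique `{a} ∪ v` is positive definite, and its `k + 1` vectors are independent: `k < n`.

Every apex `x` of `v` has the same orthogonal projection `p = t / (1 + (k - 1) t) • ∑ v` onto
`span v`. Conversely, the reflection `2 p - a` of an apex `a ∉ span v` is a second apex. If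
`n = k + 1`, then `(span v)ᗮ` is a line, and this forces `b = 2 p - a`, so that
`⟪a, b⟫ = 2 ⟪a, p⟫ - 1 = 2 k t² / (1 + (k - 1) t) - 1`.
-/

open scoped RealInnerProductSpace
open Finset Module Submodule

variable {E : Type*} [NormedAddCommGroup E] [InnerProductSpace ℝ E]

structure IsEquiangular {ι : Type*} (t : ℝ) (v : ι → E) : Prop where
  norm_eq_one : ∀ i, ‖v i‖ = 1
  inner_eq : Pairwise fun i j => ⟪v i, v j⟫ = t

namespace IsEquiangular

variable {ι : Type*} {t : ℝ} {v : ι → E}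

lemma inner_eq_add_ite [DecidableEq ι] (hv : IsEquiangular t v) (i j : ι) :
    ⟪v i, v j⟫ = t + if i = j then 1 - t else 0 := by
  split_ifs with h
  · rw [h, real_inner_self_eq_norm_sq, hv.norm_eq_one]; ring
  · rw [add_zero]; exact hv.inner_eq h

lemma comp {κ : Type*} (hv : IsEquiangular t v) {f : κ → ι} (hf : Function.Injective f) :
    IsEquiangular t (v ∘ f) :=
  ⟨fun i => hv.norm_eq_one (f i), fun _ _ hij => hv.inner_eq (hf.ne hij)⟩

lemma cons {m : ℕ} {v : Fin m → E} (hv : IsEquiangular t v) {a : E} (ha : ‖a‖ = 1)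
    (hav : ∀ i, ⟪a, v i⟫ = t) : IsEquiangular t (Fin.cons a v : Fin (m + 1) → E) := by
  refine ⟨Fin.cases ha hv.norm_eq_one, fun i j hij => ?_⟩
  induction i using Fin.cases <;> induction j using Fin.cases
  · exact absurd rfl hij
  · exact hav _
  · rw [Fin.cons_zero, Fin.cons_succ, real_inner_comm]; exact hav _
  · exact hv.inner_eq fun h => hij (congrArg Fin.succ h)

variable [Fintype ι]

lemma norm_sum_smul_sq (hv : IsEquiangular t v) (g : ι → ℝ) :
    ‖∑ i, g i • v i‖ ^ 2 = (1 - t) * ∑ i, g i ^ 2 + t * (∑ i, g i) ^ 2 := by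
  classical
  rw [← real_inner_self_eq_norm_sq, sum_inner]
  simp_rw [inner_sum, real_inner_smul_left, real_inner_smul_right, hv.inner_eq_add_ite, mul_add,
    mul_ite, mul_zero, sum_add_distrib, sum_ite_eq, mem_univ, if_true, sq, sum_mul_sum, mul_sum]
  rw [add_comm]
  congr 1 <;> refine sum_congr rfl fun _ _ => ?_
  · ring
  · exact sum_congr rfl fun _ _ => by ring

lemma inner_sum_right (hv : IsEquiangular t v) (i : ι) :
    ⟪v i, ∑ j, v j⟫ = 1 + (Fintype.card ι - 1) * t := by
  classical
  simp_rw [inner_sum, hv.inner_eq_add_ite, sum_add_distrib, sum_ite_eq, mem_univ, if_true,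
    sum_const, card_univ, nsmul_eq_mul]
  ring

lemma norm_sum_sq (hv : IsEquiangular t v) :
    ‖∑ i, v i‖ ^ 2 = Fintype.card ι * (1 + (Fintype.card ι - 1) * t) := by
  rw [← real_inner_self_eq_norm_sq, sum_inner]
  simp_rw [hv.inner_sum_right, sum_const, card_univ, nsmul_eq_mul]

lemma linearIndependent (hv : IsEquiangular t v) (ht : t < 1)
    (hpos : 0 < 1 + (Fintype.card ι - 1) * t) : LinearIndependent ℝ v := by
  rw [Fintype.linearIndependent_iff]
  intro g hg i
  have hgram := hv.norm_sum_smul_sq g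
  rw [hg, norm_zero, zero_pow two_ne_zero] at hgram
  have hcs : (∑ i, g i) ^ 2 ≤ Fintype.card ι * ∑ i, g i ^ 2 := by
    simpa using sq_sum_le_card_mul_sum_sq (s := univ) (f := g)
  have hsq : ∑ i, g i ^ 2 = 0 := by
    have : 0 ≤ ∑ i, g i ^ 2 := sum_nonneg fun _ _ => sq_nonneg _
    rcases le_or_gt 0 t with h | h <;> nlinarith [sq_nonneg (∑ i, g i)]
  exact pow_eq_zero_iff two_ne_zero |>.mp <|
    (sum_eq_zero_iff_of_nonneg fun _ _ => sq_nonneg _).mp hsq i (mem_univ i)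

end IsEquiangular

lemma exists_isEquiangular {ι : Type*} [Fintype ι] [Nonempty ι] {t : ℝ} {e : ι → E}
    (he : Orthonormal ℝ e) (ht : t ≤ 1)
    (hpos : 0 ≤ 1 + (Fintype.card ι - 1) * t) : ∃ v : ι → E, IsEquiangular t v := by
  classical
  set m : ℝ := (Fintype.card ι : ℝ)
  have hm : m ≠ 0 := by positivity
  set α := √(1 - t)
  set γ := √(1 + (m - 1) * t)
  set β := (γ - α) / m
  have hα : α ^ 2 = 1 - t := Real.sq_sqrt (by linarith)
  have hγ : γ ^ 2 = 1 + (m - 1) * t := Real.sq_sqrt hpos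
  have hαβ : α + m * β = γ := by simp only [β]; field_simp; ring
  have hβ : 2 * α * β + m * β ^ 2 = t := by
    apply mul_left_cancel₀ hm
    linear_combination (α + m * β + γ) * hαβ + hγ - hα
  have he_sum (i : ι) : ⟪e i, ∑ j, e j⟫ = 1 := by
    simp [inner_sum, orthonormal_iff_ite.mp he]
  have hsum_sum : ⟪∑ j, e j, ∑ j, e j⟫ = m := by
    rw [sum_inner]; simp [he_sum, m]
  have hinner (i j : ι) : ⟪α • e i + β • ∑ k, e k, α • e j + β • ∑ k, e k⟫ =
      (if i = j then α ^ 2 else 0) + t := by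
    simp only [inner_add_left, inner_add_right, real_inner_smul_left, real_inner_smul_right,
      orthonormal_iff_ite.mp he, he_sum, real_inner_comm (e j) (∑ k, e k), hsum_sum]
    rw [← hβ]; split_ifs <;> ring
  refine ⟨fun i => α • e i + β • ∑ k, e k, fun i => ?_, fun i j hij => ?_⟩
  · rw [norm_eq_sqrt_real_inner, hinner, if_pos rfl, hα, sub_add_cancel, Real.sqrt_one]
  · simp only [hinner, if_neg hij, zero_add]

lemma mem_orthogonal_span_range {ι : Type*} {v : ι → E} {x : E} (h : ∀ i, ⟪v i, x⟫ = 0) :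
    x ∈ (span ℝ (Set.range v))ᗮ := by
  rw [mem_orthogonal]
  intro u hu
  induction hu using span_induction with
  | mem _ hu => obtain ⟨i, rfl⟩ := hu; exact h i
  | zero => exact inner_zero_left x
  | add _ _ _ _ hu hw => rw [inner_add_left, hu, hw, add_zero]
  | smul c _ _ hu => rw [real_inner_smul_left, hu, mul_zero]

section FootPoint

variable {ι : Type*} [Fintype ι] {t : ℝ} {v : ι → E}

/-- The orthogonal projection onto `span (range v)` of every `x` with `⟪x, v i⟫ = t` for all `i`
(junk if `1 + (card ι - 1) t = 0`). -/
noncomputable def footPoint (t : ℝ) (v : ι → E) : E :=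
  (t / (1 + (Fintype.card ι - 1) * t)) • ∑ i, v i

lemma footPoint_mem_span : footPoint t v ∈ span ℝ (Set.range v) :=
  smul_mem _ _ (sum_mem fun i _ => subset_span ⟨i, rfl⟩)

lemma inner_footPoint_of_forall_inner_eq {x : E} (hx : ∀ i, ⟪x, v i⟫ = t) :
    ⟪x, footPoint t v⟫ = Fintype.card ι * t ^ 2 / (1 + (Fintype.card ι - 1) * t) := by
  simp only [footPoint, real_inner_smul_right, inner_sum, hx, sum_const, card_univ, nsmul_eq_mul]
  ring

lemma IsEquiangular.inner_footPoint (hv : IsEquiangular t v)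
    (hden : 1 + (Fintype.card ι - 1) * t ≠ 0) (i : ι) : ⟪v i, footPoint t v⟫ = t := by
  rw [footPoint, real_inner_smul_right, hv.inner_sum_right, div_mul_cancel₀ _ hden]

lemma IsEquiangular.inner_footPoint_self (hv : IsEquiangular t v)
    (hden : 1 + (Fintype.card ι - 1) * t ≠ 0) :
    ⟪footPoint t v, footPoint t v⟫ = Fintype.card ι * t ^ 2 / (1 + (Fintype.card ι - 1) * t) :=
  inner_footPoint_of_forall_inner_eq fun i => by
    rw [real_inner_comm]; exact hv.inner_footPoint hden i

end FootPoint

structure IsRhombus {m : ℕ} (t : ℝ) (a b : E) (v : Fin m → E) : Prop where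
  ne : a ≠ b
  norm_left : ‖a‖ = 1
  norm_right : ‖b‖ = 1
  equiangular : IsEquiangular t v
  inner_left : ∀ i, ⟪a, v i⟫ = t
  inner_right : ∀ i, ⟪b, v i⟫ = t

lemma one_add_sub_one_mul_pos {m t : ℝ} (hm : 0 ≤ m) (ht : t < 1) (h : 0 < 1 + m * t) :
    0 < 1 + (m - 1) * t := by
  rcases le_or_gt t 0 with h' | h' <;> nlinarith

namespace IsRhombus

variable {m : ℕ} {t : ℝ} {a b : E} {v : Fin m → E}

lemma lt_one (h : IsRhombus t a b v) (hm : 0 < m) : t < 1 := by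
  let i : Fin m := ⟨0, hm⟩
  have hle : t ≤ 1 := by
    simpa [h.inner_left i, h.norm_left, h.equiangular.norm_eq_one i] using
      real_inner_le_norm a (v i)
  refine hle.lt_of_ne fun ht => h.ne ?_
  have hav := (inner_eq_one_iff_of_norm_eq_one h.norm_left (h.equiangular.norm_eq_one i)).1
    (ht ▸ h.inner_left i)
  have hbv := (inner_eq_one_iff_of_norm_eq_one h.norm_right (h.equiangular.norm_eq_one i)).1
    (ht ▸ h.inner_right i)
  rw [hav, hbv]

lemma one_add_mul_pos (h : IsRhombus t a b v) : 0 < 1 + m * t := by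
  have hnorm {c : E} (hc : ‖c‖ = 1) (hcv : ∀ i, ⟪c, v i⟫ = t) :
      ‖c + ∑ i, v i‖ ^ 2 = (m + 1) * (1 + m * t) := by
    simpa using (h.equiangular.cons hc hcv).norm_sum_sq
  have ha := hnorm h.norm_left h.inner_left
  have hb := hnorm h.norm_right h.inner_right
  have hnonneg : 0 ≤ 1 + m * t :=
    nonneg_of_mul_nonneg_right (ha ▸ sq_nonneg _) (by positivity)
  refine hnonneg.lt_of_ne fun h0 => h.ne ?_
  rw [← h0, mul_zero, sq_eq_zero_iff, norm_eq_zero] at ha hb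
  exact add_right_cancel (ha.trans hb.symm)

lemma linearIndependent_cons (h : IsRhombus t a b v) (hm : 0 < m) :
    LinearIndependent ℝ (Fin.cons a v : Fin (m + 1) → E) :=
  (h.equiangular.cons h.norm_left h.inner_left).linearIndependent (h.lt_one hm)
    (by simpa using h.one_add_mul_pos)

lemma add_one_le_finrank [FiniteDimensional ℝ E] (h : IsRhombus t a b v) (hm : 0 < m) :
    m + 1 ≤ finrank ℝ E := by
  simpa using (h.linearIndependent_cons hm).fintype_card_le_finrank

lemma add_eq_two_smul_footPoint (h : IsRhombus t a b v) (hm : 0 < m)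
    (hE : finrank ℝ E = m + 1) : a + b = (2 : ℝ) • footPoint t v := by
  have hden : 1 + ((Fintype.card (Fin m) : ℝ) - 1) * t ≠ 0 := by
    simpa using (one_add_sub_one_mul_pos (Nat.cast_nonneg m) (h.lt_one hm) h.one_add_mul_pos).ne'
  have hab : a - b ∈ (span ℝ (Set.range v))ᗮ := mem_orthogonal_span_range fun i => by
    rw [inner_sub_right, real_inner_comm, h.inner_left, real_inner_comm, h.inner_right, sub_self]
  have hli : LinearIndependent ℝ (Fin.cons (a - b) v : Fin (m + 1) → E) := by
    refine linearIndependent_finCons.2 ⟨h.equiangular.linearIndependent (h.lt_one hm) ?_, ?_⟩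
    · simpa using one_add_sub_one_mul_pos (Nat.cast_nonneg m) (h.lt_one hm) h.one_add_mul_pos
    · intro hK
      have := (inf_orthogonal_eq_bot _).le ⟨hK, hab⟩
      exact sub_ne_zero.2 h.ne ((mem_bot ℝ).1 this)
  have hspan := hli.span_eq_top_of_card_eq_finrank (by simp [hE])
  -- `a + b - 2 p` is orthogonal to the basis `(a - b, v)`
  have hy : a + b - (2 : ℝ) • footPoint t v ∈ (span ℝ (Set.range (Fin.cons (a - b) v)))ᗮ := by
    refine mem_orthogonal_span_range (Fin.cases ?_ fun i => ?_)
    · have hp := inner_left_of_mem_orthogonal (footPoint_mem_span (t := t)) hab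
      simp only [Fin.cons_zero, inner_sub_left, inner_sub_right, inner_add_right,
        real_inner_smul_right, real_inner_self_eq_norm_sq, h.norm_left, h.norm_right,
        real_inner_comm a b] at hp ⊢
      linear_combination (-2) * hp
    · simp only [Fin.cons_succ, inner_sub_right, inner_add_right, real_inner_smul_right,
        h.equiangular.inner_footPoint hden, real_inner_comm a, real_inner_comm b, h.inner_left,
        h.inner_right]
      ring
  rwa [hspan, top_orthogonal_eq_bot, mem_bot, sub_eq_zero] at hy

lemma inner_eq (h : IsRhombus t a b v) (hm : 0 < m) (hE : finrank ℝ E = m + 1) :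
    ⟪a, b⟫ = 2 * m * t ^ 2 / ((m - 1) * t + 1) - 1 := by
  rw [eq_sub_of_add_eq' (h.add_eq_two_smul_footPoint hm hE), inner_sub_right,
    real_inner_smul_right, inner_footPoint_of_forall_inner_eq h.inner_left,
    real_inner_self_eq_norm_sq, h.norm_left]
  simp only [Fintype.card_fin]
  ring

lemma of_notMem_span (hv : IsEquiangular t v) (ha : ‖a‖ = 1) (hav : ∀ i, ⟪a, v i⟫ = t)
    (hden : 1 + (m - 1) * t ≠ 0) (haK : a ∉ span ℝ (Set.range v)) :
    IsRhombus t a ((2 : ℝ) • footPoint t v - a) v := by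
  have hden' : 1 + ((Fintype.card (Fin m) : ℝ) - 1) * t ≠ 0 := by simpa using hden
  have hpv (i : Fin m) : ⟪footPoint t v, v i⟫ = t := by
    rw [real_inner_comm]; exact hv.inner_footPoint hden' i
  refine ⟨fun hab => haK ?_, ha, ?_, hv, hav, fun i => ?_⟩
  · have : a = footPoint t v := by
      rw [← sub_eq_zero] at hab ⊢
      rw [show a - ((2 : ℝ) • footPoint t v - a) = (2 : ℝ) • (a - footPoint t v) by module] at hab
      exact (smul_eq_zero.1 hab).resolve_left two_ne_zero
    exact this ▸ footPoint_mem_span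
  · rw [norm_eq_sqrt_real_inner, Real.sqrt_eq_one]
    simp only [inner_sub_left, inner_sub_right, real_inner_smul_left, real_inner_smul_right,
      hv.inner_footPoint_self hden', inner_footPoint_of_forall_inner_eq hav,
      real_inner_comm a (footPoint t v), real_inner_self_eq_norm_sq a, ha]
    ring
  · rw [inner_sub_left, real_inner_smul_left, hpv, hav]
    ring

end IsRhombus

theorem exists_isRhombus [FiniteDimensional ℝ E] {m : ℕ} {t : ℝ} (hm : m < finrank ℝ E)
    (ht : t < 1) (hpos : 0 < 1 + m * t) : ∃ (a b : E) (v : Fin m → E), IsRhombus t a b v := by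
  have he : Orthonormal ℝ (stdOrthonormalBasis ℝ E ∘ Fin.castLE hm) :=
    (stdOrthonormalBasis ℝ E).orthonormal.comp _ (Fin.castLE_injective hm)
  obtain ⟨w, hw⟩ := exists_isEquiangular he ht.le (by simpa using hpos.le)
  have hli : LinearIndependent ℝ (Fin.cons (w 0) (Fin.tail w)) := by
    rw [Fin.cons_self_tail]; exact hw.linearIndependent ht (by simpa using hpos)
  refine ⟨w 0, _, Fin.tail w, IsRhombus.of_notMem_span (hw.comp (Fin.succ_injective m))
    (hw.norm_eq_one 0) (fun i => hw.inner_eq (Fin.succ_ne_zero i).symm)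
    (one_add_sub_one_mul_pos (Nat.cast_nonneg m) ht hpos).ne' (linearIndependent_finCons.1 hli).2⟩

lemma realization_iff_isRhombus {k : ℕ} (hk : 0 < k) {t : ℝ} (f : Fin (k + 2) → E) :
    (Function.Injective f ∧ (∀ i, ‖f i‖ = 1) ∧
      ∀ i j : Fin (k + 2), i ≠ j → ¬(({i, j} : Set (Fin (k + 2))) = {0, 1}) → ⟪f i, f j⟫ = t) ↔
    IsRhombus t (f 0) (f 1) fun i : Fin k => f i.succ.succ := by
  have hpair {i j : Fin (k + 2)} (hj : 2 ≤ j.val) : ¬(({i, j} : Set (Fin (k + 2))) = {0, 1}) := by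
    rw [Set.pair_eq_pair_iff]
    rintro (⟨-, rfl⟩ | ⟨-, rfl⟩) <;> simp at hj
  constructor
  · rintro ⟨hinj, hnorm, hedge⟩
    have hedge' (i : Fin (k + 2)) (j : Fin k) (hij : i ≠ j.succ.succ) : ⟪f i, f j.succ.succ⟫ = t :=
      hedge _ _ hij (hpair (by simp))
    refine ⟨hinj.ne zero_ne_one, hnorm 0, hnorm 1, ⟨fun i => hnorm _, fun i j hij => ?_⟩,
      fun i => hedge' _ _ ?_, fun i => hedge' _ _ ?_⟩
    · exact hedge' _ _ (by simpa using hij)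
    · exact (Fin.succ_ne_zero _).symm
    · simp [Fin.ext_iff]
  · intro h
    have hnorm : ∀ i, ‖f i‖ = 1 := by
      simp only [Fin.forall_fin_succ, Fin.succ_zero_eq_one]
      exact ⟨h.norm_left, h.norm_right, h.equiangular.norm_eq_one⟩
    have hedge : ∀ i j : Fin (k + 2), i ≠ j → ¬(({i, j} : Set (Fin (k + 2))) = {0, 1}) →
        ⟪f i, f j⟫ = t := by
      simp only [Fin.forall_fin_succ, Fin.succ_zero_eq_one]
      refine ⟨⟨fun h00 => absurd rfl h00, fun _ h01 => absurd trivial h01,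
          fun i _ _ => h.inner_left i⟩,
        ⟨fun _ h10 => absurd (Set.pair_comm 1 0) h10, fun h11 => absurd rfl h11,
          fun i _ _ => h.inner_right i⟩,
        fun i => ⟨fun _ _ => ?_, fun _ _ => ?_, fun j hij _ => h.equiangular.inner_eq ?_⟩⟩
      · rw [real_inner_comm]; exact h.inner_left i
      · rw [real_inner_comm]; exact h.inner_right i
      · simpa using hij
    refine ⟨fun i j hfij => by_contra fun hij => ?_, hnorm, hedge⟩
    by_cases hij01 : ({i, j} : Set (Fin (k + 2))) = {0, 1}
    · rcases Set.pair_eq_pair_iff.1 hij01 with ⟨rfl, rfl⟩ | ⟨rfl, rfl⟩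
      exacts [h.ne hfij, h.ne hfij.symm]
    · have := hedge i j hij hij01
      rw [hfij, real_inner_self_eq_norm_sq, hnorm, one_pow] at this
      exact (h.lt_one hk).ne this.symm

/-- The `k`-rhombus is `K_{k+2}` minus the edge between the vertices `0` and `1`
(of `Fin (k+2)`); a realization maps vertices injectively to unit vectors with
inner product `t` across every edge. -/
theorem rhombus_realizability (n k : ℕ) (hk : 1 ≤ k) (t : ℝ) :
    ((∃ f : Fin (k + 2) → EuclideanSpace ℝ (Fin n),
        Function.Injective f ∧ (∀ i, ‖f i‖ = 1) ∧
        (∀ i j : Fin (k + 2), i ≠ j → ¬(({i, j} : Set (Fin (k + 2))) = {0, 1}) →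
          ⟪f i, f j⟫ = t)) ↔
      (k < n ∧ -1 / k < t ∧ t < 1)) ∧
    (k + 1 = n →
      ∀ f : Fin (k + 2) → EuclideanSpace ℝ (Fin n),
        Function.Injective f → (∀ i, ‖f i‖ = 1) →
        (∀ i j : Fin (k + 2), i ≠ j → ¬(({i, j} : Set (Fin (k + 2))) = {0, 1}) →
          ⟪f i, f j⟫ = t) →
        ⟪f 0, f 1⟫ = 2 * k * t ^ 2 / ((k - 1 : ℝ) * t + 1) - 1) := by
  have hE : finrank ℝ (EuclideanSpace ℝ (Fin n)) = n := finrank_euclideanSpace_fin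
  have hbound : -1 / (k : ℝ) < t ↔ 0 < 1 + k * t := by
    rw [div_lt_iff₀ (by positivity)]
    constructor <;> intro <;> linarith
  refine ⟨⟨fun ⟨f, hf⟩ => ?_, fun ⟨hkn, ht0, ht1⟩ => ?_⟩, fun hn f hinj hnorm hedge => ?_⟩
  · have h := (realization_iff_isRhombus hk f).1 hf
    exact ⟨by simpa [hE] using h.add_one_le_finrank hk, hbound.2 h.one_add_mul_pos, h.lt_one hk⟩
  · obtain ⟨a, b, v, h⟩ := exists_isRhombus (by rwa [hE]) ht1 (hbound.1 ht0)
    exact ⟨Fin.cons a (Fin.cons b v), (realization_iff_isRhombus hk _).2 (by simpa using h)⟩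
  · exact ((realization_iff_isRhombus hk f).1 ⟨hinj, hnorm, hedge⟩).inner_eq hk (by rw [hE, hn])
end

section
/- For every integer k ≥ 1, the cubic polynomial p(t) = 8k²t³ - (k² - 10k + 1)t² - 2(k-1)t - 1 has three real roots t₁ ≤ t₂ ≤ t₃ satisfying t₁ ≤ t₂ < 0 < t₃. -/
/-- A quadratic vanishing at three distinct points vanishes everywhere. -/
lemma quad_vanish (A B C x y z : ℝ) (hxy : x ≠ y) (hxz : x ≠ z) (hyz : y ≠ z)
    (h1 : A * x ^ 2 + B * x + C = 0) (h2 : A * y ^ 2 + B * y + C = 0)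
    (h3 : A * z ^ 2 + B * z + C = 0) : A = 0 ∧ B = 0 ∧ C = 0 := by
  have hxy' : x - y ≠ 0 := sub_ne_zero.mpr hxy
  have hyz' : y - z ≠ 0 := sub_ne_zero.mpr hyz
  have hxz' : x - z ≠ 0 := sub_ne_zero.mpr hxz
  have h12 : (x - y) * (A * (x + y) + B) = 0 := by linear_combination h1 - h2
  have h23 : (y - z) * (A * (y + z) + B) = 0 := by linear_combination h2 - h3
  have h12' : A * (x + y) + B = 0 := by
    rcases mul_eq_zero.mp h12 with h | h
    · exact absurd h hxy'
    · exact h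
  have h23' : A * (y + z) + B = 0 := by
    rcases mul_eq_zero.mp h23 with h | h
    · exact absurd h hyz'
    · exact h
  have hA : (x - z) * A = 0 := by linear_combination h12' - h23'
  have hA' : A = 0 := by
    rcases mul_eq_zero.mp hA with h | h
    · exact absurd h hxz'
    · exact h
  have hB : B = 0 := by linear_combination h12' - (x + y) * hA'
  have hC : C = 0 := by linear_combination h1 - x ^ 2 * hA' - x * hB
  exact ⟨hA', hB, hC⟩

theorem spindle_cubic_roots (k : ℕ) (hk : 1 ≤ k) :
    ∃ t₁ t₂ t₃ : ℝ, t₁ ≤ t₂ ∧ t₂ < 0 ∧ 0 < t₃ ∧ t₂ ≤ t₃ ∧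
      ∀ t : ℝ, 8 * k ^ 2 * t ^ 3 - ((k : ℝ) ^ 2 - 10 * k + 1) * t ^ 2
          - 2 * ((k : ℝ) - 1) * t - 1
        = 8 * k ^ 2 * (t - t₁) * (t - t₂) * (t - t₃) := by
  set K : ℝ := (k : ℝ) with hKdef
  have hK1 : (1 : ℝ) ≤ K := by rw [hKdef]; exact_mod_cast hk
  have hKpos : (0 : ℝ) < K := lt_of_lt_of_le one_pos hK1
  set f : ℝ → ℝ := fun t =>
    8 * K ^ 2 * t ^ 3 - (K ^ 2 - 10 * K + 1) * t ^ 2 - 2 * (K - 1) * t - 1 with hfdef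
  have hcont : Continuous f := by
    simp only [hfdef]; continuity
  set w : ℝ := (1 - 3 * K) / (3 * K ^ 2) with hwdef
  -- value at -1
  have hfm1 : f (-1) < 0 := by
    have : f (-1) = -(3 * K - 2) ^ 2 := by simp only [hfdef]; ring
    rw [this]
    have : (1 : ℝ) ≤ (3 * K - 2) ^ 2 := by nlinarith
    linarith
  -- value at w
  have hfw : 0 < f w := by
    have hK2 : (K ^ 2 : ℝ) ≠ 0 := by positivity
    have hval : f w = (24 * K ^ 2 - 24 * K + 5) / (27 * K ^ 4) := by
      simp only [hfdef, hwdef]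
      field_simp
      ring
    rw [hval]
    have hnum : (0 : ℝ) < 24 * K ^ 2 - 24 * K + 5 := by nlinarith
    positivity
  -- value at 0
  have hf0 : f 0 = -1 := by simp [hfdef]
  have hf0' : f 0 < 0 := by rw [hf0]; norm_num
  -- value at 1
  have hf1 : 0 < f 1 := by
    have : f 1 = 7 * K ^ 2 + 8 * K := by simp only [hfdef]; ring
    rw [this]; nlinarith
  -- ordering of sample points
  have hwneg : w < 0 := by
    apply div_neg_of_neg_of_pos
    · linarith
    · positivity
  have hm1w : (-1 : ℝ) < w := by
    rw [hwdef, lt_div_iff₀ (by positivity : (0:ℝ) < 3 * K ^ 2)]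
    nlinarith
  -- root t₁ in [-1, w]
  obtain ⟨t₁, ht₁mem, ht₁⟩ :=
    intermediate_value_Icc (le_of_lt hm1w) hcont.continuousOn
      (Set.mem_Icc.mpr ⟨le_of_lt hfm1, le_of_lt hfw⟩)
  -- root t₂ in [w, 0]
  obtain ⟨t₂, ht₂mem, ht₂⟩ :=
    intermediate_value_Icc' (le_of_lt hwneg) hcont.continuousOn
      (Set.mem_Icc.mpr ⟨le_of_lt hf0', le_of_lt hfw⟩)
  -- root t₃ in [0, 1]
  obtain ⟨t₃, ht₃mem, ht₃⟩ :=
    intermediate_value_Icc (by norm_num : (0:ℝ) ≤ 1) hcont.continuousOn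
      (Set.mem_Icc.mpr ⟨le_of_lt hf0', le_of_lt hf1⟩)
  obtain ⟨ht₁l, ht₁r⟩ := Set.mem_Icc.mp ht₁mem
  obtain ⟨ht₂l, ht₂r⟩ := Set.mem_Icc.mp ht₂mem
  obtain ⟨ht₃l, ht₃r⟩ := Set.mem_Icc.mp ht₃mem
  -- strict separations
  have ht₂w : w < t₂ := by
    rcases lt_or_eq_of_le ht₂l with h | h
    · exact h
    · exfalso; rw [← h] at ht₂; rw [← ht₂] at hfw; exact lt_irrefl _ hfw
  have ht₂0 : t₂ < 0 := by
    rcases lt_or_eq_of_le ht₂r with h | h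
    · exact h
    · exfalso; rw [h] at ht₂; rw [hf0] at ht₂; norm_num at ht₂
  have ht₃0 : 0 < t₃ := by
    rcases lt_or_eq_of_le ht₃l with h | h
    · exact h
    · exfalso; rw [← h] at ht₃; rw [hf0] at ht₃; norm_num at ht₃
  have h12 : t₁ < t₂ := lt_of_le_of_lt ht₁r ht₂w
  have h23 : t₂ < t₃ := lt_trans ht₂0 ht₃0
  have h13 : t₁ < t₃ := lt_trans h12 h23
  refine ⟨t₁, t₂, t₃, le_of_lt h12, ht₂0, ht₃0, le_of_lt h23, ?_⟩
  -- factorization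
  set A : ℝ := 8 * K ^ 2 * (t₁ + t₂ + t₃) - (K ^ 2 - 10 * K + 1) with hAdef
  set B : ℝ := -(2 * (K - 1)) - 8 * K ^ 2 * (t₁ * t₂ + t₁ * t₃ + t₂ * t₃) with hBdef
  set C : ℝ := 8 * K ^ 2 * (t₁ * t₂ * t₃) - 1 with hCdef
  have e1 : A * t₁ ^ 2 + B * t₁ + C = 0 := by
    have := ht₁; simp only [hfdef] at this
    linear_combination this
  have e2 : A * t₂ ^ 2 + B * t₂ + C = 0 := by
    have := ht₂; simp only [hfdef] at this
    linear_combination this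
  have e3 : A * t₃ ^ 2 + B * t₃ + C = 0 := by
    have := ht₃; simp only [hfdef] at this
    linear_combination this
  obtain ⟨hA, hB, hC⟩ := quad_vanish A B C t₁ t₂ t₃ (ne_of_lt h12) (ne_of_lt h13)
    (ne_of_lt h23) e1 e2 e3
  intro t
  have : 8 * K ^ 2 * t ^ 3 - (K ^ 2 - 10 * K + 1) * t ^ 2 - 2 * (K - 1) * t - 1
      = 8 * K ^ 2 * (t - t₁) * (t - t₂) * (t - t₃) := by
    linear_combination t ^ 2 * hA + t * hB + hC
  linarith [this]
end

section
/- Let y₁, ..., y_{n+1} be real numbers with y_i ≥ -√3 for all i and ∑_i (y_i - y_i³) = 0. Then ∑_i y_i ≤ n+1, with equality if and only if y_i = 1 for all i. -/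
theorem eigenvalue_optimization (n : ℕ) (y : Fin (n + 1) → ℝ)
    (hy : ∀ i, -Real.sqrt 3 ≤ y i)
    (hsum : ∑ i, (y i - y i ^ 3) = 0) :
    (∑ i, y i ≤ n + 1) ∧ (∑ i, y i = n + 1 ↔ ∀ i, y i = 1) := by
  have hs3 : Real.sqrt 3 < 2 := by
    nlinarith [Real.sq_sqrt (by norm_num : (3:ℝ) ≥ 0), Real.sqrt_nonneg 3]
  have key : ∀ i, 3 * y i - y i ^ 3 ≤ 2 := by
    intro i
    have h := hy i
    nlinarith [sq_nonneg (y i - 1)]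
  have keyeq : ∀ i, 3 * y i - y i ^ 3 = 2 ↔ y i = 1 := by
    intro i
    constructor
    · intro h
      have h2 := hy i
      have h0 : (y i - 1) ^ 2 * (y i + 2) = 0 := by linear_combination -h
      have hpos : (0:ℝ) < y i + 2 := by linarith
      have h1 : (y i - 1) ^ 2 = 0 := by
        rcases mul_eq_zero.mp h0 with h' | h'
        · exact h'
        · linarith
      have := pow_eq_zero_iff (n := 2) (by norm_num) |>.mp h1
      linarith
    · intro h; rw [h]; ring
  have hsum2 : ∑ i, (3 * y i - y i ^ 3) = 2 * ∑ i, y i := by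
    have : ∀ i : Fin (n+1), 3 * y i - y i ^ 3 = 2 * y i + (y i - y i ^ 3) := by
      intro i; ring
    rw [Finset.sum_congr rfl (fun i _ => this i), Finset.sum_add_distrib, hsum,
      ← Finset.mul_sum]
    ring
  have hle : ∑ i, (3 * y i - y i ^ 3) ≤ 2 * ((n:ℝ) + 1) := by
    calc ∑ i, (3 * y i - y i ^ 3) ≤ ∑ _i : Fin (n+1), (2:ℝ) :=
          Finset.sum_le_sum (fun i _ => key i)
      _ = 2 * ((n:ℝ) + 1) := by simp [Finset.sum_const, mul_comm]
  constructor
  · linarith [hsum2 ▸ hle]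
  · constructor
    · intro h
      have heq : ∑ i, (3 * y i - y i ^ 3) = ∑ _i : Fin (n+1), (2:ℝ) := by
        rw [hsum2, h]; simp [Finset.sum_const, mul_comm]
      have := (Finset.sum_eq_sum_iff_of_le (fun i _ => key i)).mp heq
      intro i
      exact (keyeq i).mp (this i (Finset.mem_univ i))
    · intro h
      have : ∑ i, y i = ∑ _i : Fin (n+1), (1:ℝ) :=
        Finset.sum_congr rfl (fun i _ => h i)
      simp [this]
end

section
/- Let S be a maximum obtuse almost-equiangular subset of S^{n-1} and let G be its distance graph (x adjacent to y iff x·y = -1/n). If G contains a clique of size n+1, then S is the disjoint union of two regular n-simplices (i.e., the complement of G is the complete bipartite-type graph formed by two disjoint K_{n+1}'s). -/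
/-!
Lift every vector `y` of the `n`-dimensional space to `(y, 1/√n)` in one dimension more. This
adds `1/n` to all inner products, so pairs at inner product `-1/n` become orthogonal and the clique
becomes an orthogonal basis of `n + 1` vectors. For two points `y, y'` outside the clique which are
not adjacent, the almost-equiangularity condition says that every basis vector is orthogonal to the
lift of `y` or to that of `y'`; Parseval's identity then makes the lifts of `y` and `y'` orthogonal,
i.e. `y, y'` adjacent after all. Hence the complement of the clique is a clique too.
-/

open scoped RealInnerProductSpace
open Module

section

variable {E : Type*} [NormedAddCommGroup E] [InnerProductSpace ℝ E]

section OrthogonalBasis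

variable [FiniteDimensional ℝ E] {ι : Type*} [Fintype ι]

theorem Orthonormal.inner_eq_zero_of_forall_or {v : ι → E} (hv : Orthonormal ℝ v)
    (hcard : Fintype.card ι = finrank ℝ E) {w w' : E}
    (h : ∀ k, ⟪w, v k⟫ = 0 ∨ ⟪v k, w'⟫ = 0) : ⟪w, w'⟫ = 0 := by
  let b := OrthonormalBasis.mk hv (hv.linearIndependent.span_eq_top_of_card_eq_finrank' hcard).ge
  rw [← b.sum_inner_mul_inner, OrthonormalBasis.coe_mk]
  refine Finset.sum_eq_zero fun k _ => ?_
  rcases h k with h | h <;> simp [h]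

theorem inner_eq_zero_of_pairwise_inner_eq_zero_of_forall_or {v : ι → E} (hv0 : ∀ k, v k ≠ 0)
    (hv : Pairwise fun k l => ⟪v k, v l⟫ = 0) (hcard : Fintype.card ι = finrank ℝ E) {w w' : E}
    (h : ∀ k, ⟪w, v k⟫ = 0 ∨ ⟪v k, w'⟫ = 0) : ⟪w, w'⟫ = 0 := by
  have hon : Orthonormal ℝ fun k => ‖v k‖⁻¹ • v k :=
    ⟨fun k => norm_smul_inv_norm (hv0 k), fun k l hkl => by
      simp only [real_inner_smul_left, real_inner_smul_right, hv hkl, mul_zero]⟩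
  refine hon.inner_eq_zero_of_forall_or hcard fun k => ?_
  rcases h k with h | h <;> simp [real_inner_smul_left, real_inner_smul_right, h]

end OrthogonalBasis

theorem WithLp.inner_toLp_prod_mk (u u' : E) (s t : ℝ) :
    ⟪WithLp.toLp 2 (u, s), WithLp.toLp 2 (u', t)⟫ = ⟪u, u'⟫ + s * t := by
  simp [WithLp.prod_inner_apply, mul_comm]

theorem WithLp.finrank_prod_real [FiniteDimensional ℝ E] :
    finrank ℝ (WithLp 2 (E × ℝ)) = finrank ℝ E + 1 := by
  simp [(WithLp.linearEquiv 2 ℝ (E × ℝ)).finrank_eq]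

theorem inner_eq_neg_inv_finrank_of_forall_or [FiniteDimensional ℝ E] {ι : Type*} {x : ι → E}
    {T : Finset ι} (hT : T.card = finrank ℝ E + 1) (hunit : ∀ k ∈ T, ‖x k‖ = 1)
    (hsimplex : ∀ k ∈ T, ∀ l ∈ T, k ≠ l → ⟪x k, x l⟫ = -1 / finrank ℝ E) {u u' : E}
    (h : ∀ k ∈ T, ⟪u, x k⟫ = -1 / finrank ℝ E ∨ ⟪u', x k⟫ = -1 / finrank ℝ E) :
    ⟪u, u'⟫ = -1 / finrank ℝ E := by
  set d : ℝ := (finrank ℝ E : ℝ)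
  let z : E → WithLp 2 (E × ℝ) := fun y => WithLp.toLp 2 (y, (√d)⁻¹)
  have hz : ∀ y y', ⟪z y, z y'⟫ = ⟪y, y'⟫ + 1 / d := fun y y' => by
    rw [WithLp.inner_toLp_prod_mk, ← mul_inv, Real.mul_self_sqrt (Nat.cast_nonneg _), one_div]
  have hz0 : ∀ y y', ⟪z y, z y'⟫ = 0 ↔ ⟪y, y'⟫ = -1 / d := fun y y' => by
    rw [hz, neg_div, ← eq_neg_iff_add_eq_zero]
  have hne : ∀ k ∈ T, z (x k) ≠ 0 := fun k hk hzero => by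
    have := hz (x k) (x k)
    rw [hzero, inner_zero_left, real_inner_self_eq_norm_sq, hunit k hk] at this
    have : 0 ≤ 1 / d := by positivity
    linarith
  rw [← hz0]
  refine inner_eq_zero_of_pairwise_inner_eq_zero_of_forall_or (v := fun k : T => z (x k))
    (fun k => hne k k.2)
    (fun k l hkl => (hz0 _ _).2 (hsimplex k k.2 l l.2 (Subtype.coe_ne_coe.2 hkl)))
    (by rw [Fintype.card_coe, hT, WithLp.finrank_prod_real]) fun k => ?_
  rw [hz0, hz0, real_inner_comm u']
  exact h k k.2

end

theorem clique_implies_double_simplex_general (n : ℕ)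
    (x : Fin (2 * (n + 1)) → EuclideanSpace ℝ (Fin n))
    (hunit : ∀ i, ‖x i‖ = 1)
    (halmost : ∀ i j k : Fin (2 * (n + 1)), i ≠ j → i ≠ k → j ≠ k →
      ⟪x i, x j⟫ = -1 / n ∨ ⟪x i, x k⟫ = -1 / n ∨ ⟪x j, x k⟫ = -1 / n)
    (T : Finset (Fin (2 * (n + 1))))
    (hT : T.card = n + 1)
    (hclique : ∀ i ∈ T, ∀ j ∈ T, i ≠ j → ⟪x i, x j⟫ = -1 / n) :
    ∃ A B : Finset (Fin (2 * (n + 1))),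
      Disjoint A B ∧ A ∪ B = Finset.univ ∧ A.card = n + 1 ∧ B.card = n + 1 ∧
      (∀ i ∈ A, ∀ j ∈ A, i ≠ j → ⟪x i, x j⟫ = -1 / n) ∧
      (∀ i ∈ B, ∀ j ∈ B, i ≠ j → ⟪x i, x j⟫ = -1 / n) := by
  have hdim : finrank ℝ (EuclideanSpace ℝ (Fin n)) = n := finrank_euclideanSpace_fin
  refine ⟨T, Tᶜ, disjoint_compl_right, T.union_compl, hT, ?_, hclique, ?_⟩
  · rw [Finset.card_compl, hT, Fintype.card_fin]
    omega
  intro j hj l hl hjl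
  by_contra hjl'
  rw [Finset.mem_compl] at hj hl
  have hsplit : ∀ k ∈ T, ⟪x j, x k⟫ = -1 / n ∨ ⟪x l, x k⟫ = -1 / n := fun k hk =>
    (halmost j l k hjl (ne_of_mem_of_not_mem hk hj).symm
      (ne_of_mem_of_not_mem hk hl).symm).resolve_left hjl'
  have hadj := inner_eq_neg_inv_finrank_of_forall_or (x := x) (by rw [hT, hdim])
    (fun k _ => hunit k) (by rwa [hdim]) (by rwa [hdim])
  exact hjl' (by rwa [hdim] at hadj)

theorem clique_implies_double_simplex (n : ℕ)
    (x : Fin (2 * (n + 1)) → EuclideanSpace ℝ (Fin n))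
    (hinj : Function.Injective x)
    (hunit : ∀ i, ‖x i‖ = 1)
    (halmost : ∀ i j k : Fin (2 * (n + 1)), i ≠ j → i ≠ k → j ≠ k →
      ⟪x i, x j⟫ = -1 / n ∨ ⟪x i, x k⟫ = -1 / n ∨ ⟪x j, x k⟫ = -1 / n)
    (T : Finset (Fin (2 * (n + 1))))
    (hT : T.card = n + 1)
    (hclique : ∀ i ∈ T, ∀ j ∈ T, i ≠ j → ⟪x i, x j⟫ = -1 / n) :
    ∃ A B : Finset (Fin (2 * (n + 1))),
      Disjoint A B ∧ A ∪ B = Finset.univ ∧ A.card = n + 1 ∧ B.card = n + 1 ∧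
      (∀ i ∈ A, ∀ j ∈ A, i ≠ j → ⟪x i, x j⟫ = -1 / n) ∧
      (∀ i ∈ B, ∀ j ∈ B, i ≠ j → ⟪x i, x j⟫ = -1 / n) :=
  clique_implies_double_simplex_general n x hunit halmost T hT hclique
end

section
/- Let S be a maximum obtuse almost-equiangular subset of S^{n-1} with distance graph G. Then the complement of G is quadrangular: no two distinct vertices have exactly one common neighbor in the complement of G. -/
open scoped RealInnerProductSpace
open Matrix

/-!
Lifting `x u` to `y u = (√(n/(n+1)) • x u, √(1/(n+1)))` keeps unit length and turns the inner
product `-1/n` into orthogonality, so the `2(n+1)` lifted vectors in `ℝⁿ⁺¹` are almost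
orthogonal: among any three, two are orthogonal. For each `u`, the `y v` not orthogonal to `y u`
are then pairwise orthogonal, and Bessel's inequality gives `∑_{v ≠ u} ⟪y u, y v⟫² ≤ 1`, i.e.
`tr G² ≤ 4(n+1)` for the Gram matrix `G`. Since `tr G = 2(n+1)` and `rank G ≤ n+1`, the equality
case of Cauchy–Schwarz forces every nonzero eigenvalue of `G` to be `2`, so `G² = 2G`. Comparing
`(i, j)` entries gives `∑_{k ≠ i, j} G i k * G k j = 0`, which fails if exactly one term is nonzero.
-/

namespace Matrix.IsHermitian

variable {n 𝕜 : Type*} [RCLike 𝕜] [Fintype n] [DecidableEq n] {A : Matrix n n 𝕜}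

theorem trace_cfc (hA : A.IsHermitian) (f : ℝ → ℝ) :
    (cfc f A).trace = ∑ i, (f (hA.eigenvalues i) : 𝕜) := by
  rw [cfc_eq hA f, IsHermitian.cfc, Unitary.conjStarAlgAut_apply, trace_mul_comm, ← mul_assoc,
    Unitary.coe_star_mul_self, one_mul, trace_diagonal]
  rfl

theorem trace_mul_self (hA : A.IsHermitian) :
    (A * A).trace = ∑ i, ((hA.eigenvalues i ^ 2 : ℝ) : 𝕜) := by
  rw [← sq, ← cfc_pow_id (R := ℝ) A 2 hA.isSelfAdjoint, hA.trace_cfc]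

/-- The equality case of `(tr A)² ≤ rank A * tr A²`: the hypotheses force
`∑_{μ ≠ 0} (μ - c)² ≤ 0` over the eigenvalues `μ`, so every nonzero eigenvalue equals `c`. -/
theorem mul_self_eq_smul_of_trace_mul_self_le {A : Matrix n n ℝ} (hA : A.IsHermitian) {r : ℕ}
    {c : ℝ} (hrank : A.rank ≤ r) (htr : A.trace = c * r) (htr2 : (A * A).trace ≤ c ^ 2 * r) :
    A * A = c • A := by
  set μ := hA.eigenvalues
  set S := Finset.univ.filter fun i => μ i ≠ 0
  have hS : (S.card : ℝ) ≤ r := by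
    rw [hA.rank_eq_card_non_zero_eigs, Fintype.card_subtype] at hrank
    exact_mod_cast hrank
  have hsum : ∑ i ∈ S, μ i = c * r := by
    rw [Finset.sum_filter_ne_zero, ← htr, hA.trace_eq_sum_eigenvalues]; rfl
  have hsum2 : ∑ i ∈ S, μ i ^ 2 ≤ c ^ 2 * r := by
    rw [Finset.sum_filter_of_ne fun i _ h => by simpa using h]
    exact (hA.trace_mul_self).symm.trans_le htr2
  have hdev : ∑ i ∈ S, (μ i - c) ^ 2 = 0 := by
    refine le_antisymm ?_ (Finset.sum_nonneg fun i _ => sq_nonneg _)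
    calc ∑ i ∈ S, (μ i - c) ^ 2
          = ∑ i ∈ S, μ i ^ 2 - 2 * c * ∑ i ∈ S, μ i + c ^ 2 * S.card := by
          simp only [sub_sq, Finset.sum_add_distrib, Finset.sum_sub_distrib, ← Finset.sum_mul,
            ← Finset.mul_sum, Finset.sum_const, nsmul_eq_mul]
          ring
      _ ≤ 0 := by rw [hsum]; nlinarith [sq_nonneg c]
  have heig : ∀ i, μ i ^ 2 = c * μ i := by
    intro i
    by_cases hi : μ i = 0
    · simp [hi]
    · have := (Finset.sum_eq_zero_iff_of_nonneg fun i _ => sq_nonneg (μ i - c)).mp hdev i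
        (by simpa [S] using hi)
      rw [sq_eq_zero_iff, sub_eq_zero] at this
      rw [this, sq]
  calc A * A = cfc (· ^ 2 : ℝ → ℝ) A := by
        rw [cfc_pow_id (R := ℝ) A 2 hA.isSelfAdjoint, sq]
    _ = cfc (c * ·) A := cfc_congr <| by
          rw [hA.spectrum_real_eq_range_eigenvalues]
          rintro _ ⟨i, rfl⟩
          exact heig i
    _ = c • A := cfc_const_mul_id c A hA.isSelfAdjoint

end Matrix.IsHermitian

open scoped ComplexOrder in
theorem Matrix.rank_gram_le_finrank_s17 {ι 𝕜 E : Type*} [Fintype ι] [RCLike 𝕜]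
    [NormedAddCommGroup E] [InnerProductSpace 𝕜 E] [FiniteDimensional 𝕜 E] (y : ι → E) :
    (gram 𝕜 y).rank ≤ Module.finrank 𝕜 E := by
  rw [gram_eq_conjTranspose_mul (stdOrthonormalBasis 𝕜 E), rank_conjTranspose_mul_self]
  exact (rank_le_card_height _).trans_eq (by simp)

variable {ι E : Type*} [NormedAddCommGroup E] [InnerProductSpace ℝ E]

def AlmostOrthogonal (y : ι → E) : Prop :=
  ∀ i j k, i ≠ j → i ≠ k → j ≠ k → ⟪y i, y j⟫ = 0 ∨ ⟪y i, y k⟫ = 0 ∨ ⟪y j, y k⟫ = 0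

namespace AlmostOrthogonal

variable {y : ι → E}

theorem sum_inner_sq_le_one [Fintype ι] [DecidableEq ι] (hy : AlmostOrthogonal y)
    (hunit : ∀ i, ‖y i‖ = 1) (i : ι) :
    ∑ j ∈ Finset.univ.erase i, ⟪y i, y j⟫ ^ 2 ≤ 1 := by
  set T := (Finset.univ.erase i).filter fun j => ⟪y i, y j⟫ ≠ 0
  have horth : Orthonormal ℝ fun j : T => y j := by
    refine ⟨fun j => hunit j, fun j k hjk => ?_⟩
    obtain ⟨hji, hj⟩ := Finset.mem_filter.mp j.2
    obtain ⟨hki, hk⟩ := Finset.mem_filter.mp k.2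
    have := hy i j k (Finset.ne_of_mem_erase hji).symm (Finset.ne_of_mem_erase hki).symm
      (Subtype.coe_ne_coe.mpr hjk)
    tauto
  calc ∑ j ∈ Finset.univ.erase i, ⟪y i, y j⟫ ^ 2 = ∑ j ∈ T, ⟪y i, y j⟫ ^ 2 :=
        (Finset.sum_filter_of_ne fun j _ h => by simpa using h).symm
    _ = ∑ j : T, ‖⟪y j, y i⟫‖ ^ 2 := by
        rw [← Finset.sum_coe_sort T]
        simp only [Real.norm_eq_abs, sq_abs, real_inner_comm]
    _ ≤ ‖y i‖ ^ 2 := horth.sum_inner_products_le _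
    _ = 1 := by rw [hunit, one_pow]

theorem trace_gram_mul_gram_le [Fintype ι] [DecidableEq ι] (hy : AlmostOrthogonal y)
    (hunit : ∀ i, ‖y i‖ = 1) :
    (gram ℝ y * gram ℝ y).trace ≤ 2 * Fintype.card ι := by
  have hrow : ∀ i, ∑ j, ⟪y i, y j⟫ * ⟪y j, y i⟫ ≤ 2 := by
    intro i
    rw [← Finset.add_sum_erase _ _ (Finset.mem_univ i), real_inner_self_eq_norm_sq, hunit]
    simp only [real_inner_comm (y i), ← sq]
    linarith [hy.sum_inner_sq_le_one hunit i]
  calc (gram ℝ y * gram ℝ y).trace = ∑ i, ∑ j, ⟪y i, y j⟫ * ⟪y j, y i⟫ := by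
        simp [trace, mul_apply]
    _ ≤ ∑ _i : ι, (2 : ℝ) := Finset.sum_le_sum fun i _ => hrow i
    _ = 2 * Fintype.card ι := by simp [mul_comm]

theorem gram_mul_gram_eq_two_smul [Fintype ι] [DecidableEq ι] [FiniteDimensional ℝ E]
    (hy : AlmostOrthogonal y) (hunit : ∀ i, ‖y i‖ = 1)
    (hcard : Fintype.card ι = 2 * Module.finrank ℝ E) :
    gram ℝ y * gram ℝ y = (2 : ℝ) • gram ℝ y := by
  refine (isHermitian_gram ℝ y).mul_self_eq_smul_of_trace_mul_self_le (rank_gram_le_finrank_s17 y)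
    ?_ ?_
  · simp [trace, hunit, hcard]
  · have := hy.trace_gram_mul_gram_le hunit
    rw [hcard] at this
    push_cast at this ⊢
    linarith

end AlmostOrthogonal

theorem not_existsUnique_common_not_orthogonal [Fintype ι] [DecidableEq ι] {y : ι → E}
    (hunit : ∀ i, ‖y i‖ = 1) (hgram : gram ℝ y * gram ℝ y = (2 : ℝ) • gram ℝ y)
    {i j : ι} (hij : i ≠ j) :
    ¬∃! k, k ≠ i ∧ k ≠ j ∧ ⟪y k, y i⟫ ≠ 0 ∧ ⟪y k, y j⟫ ≠ 0 := by
  rintro ⟨k, ⟨hki, hkj, hik, hjk⟩, huniq⟩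
  have hentry := congr_fun₂ hgram i j
  simp only [mul_apply, gram_apply, Matrix.smul_apply, smul_eq_mul] at hentry
  have hrest : ∑ l ∈ (Finset.univ.erase i).erase j, ⟪y i, y l⟫ * ⟪y l, y j⟫
      = ⟪y i, y k⟫ * ⟪y k, y j⟫ := by
    refine Finset.sum_eq_single k (fun l hl hlk => ?_) (fun hk => ?_)
    · obtain ⟨hlj, hli⟩ : l ≠ j ∧ l ≠ i := by simpa using hl
      by_contra h
      exact hlk (huniq l ⟨hli, hlj, by rw [real_inner_comm]; exact left_ne_zero_of_mul h,
        right_ne_zero_of_mul h⟩)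
    · simp [hki, hkj] at hk
  rw [← Finset.add_sum_erase _ _ (Finset.mem_univ i),
    ← Finset.add_sum_erase _ _ (Finset.mem_erase.mpr ⟨hij.symm, Finset.mem_univ j⟩), hrest,
    real_inner_self_eq_norm_sq, real_inner_self_eq_norm_sq, hunit, hunit] at hentry
  exact mul_ne_zero (show ⟪y i, y k⟫ ≠ 0 by rwa [real_inner_comm]) hjk (by linarith)

/-- For `t = n / (n + 1)` this sends unit vectors with inner product `-1 / n` to orthogonal unit
vectors. -/
noncomputable def sphereLift (t : ℝ) (x : E) : WithLp 2 (E × ℝ) :=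
  WithLp.toLp 2 (√t • x, √(1 - t))

theorem inner_sphereLift {t : ℝ} (ht₀ : 0 ≤ t) (ht₁ : t ≤ 1) (x x' : E) :
    ⟪sphereLift t x, sphereLift t x'⟫ = t * ⟪x, x'⟫ + (1 - t) := by
  simp only [sphereLift, WithLp.prod_inner_apply, inner_smul_left, inner_smul_right,
    Real.inner_apply, conj_trivial]
  rw [← mul_assoc, Real.mul_self_sqrt ht₀, Real.mul_self_sqrt (sub_nonneg.mpr ht₁)]

theorem norm_sphereLift {t : ℝ} (ht₀ : 0 ≤ t) (ht₁ : t ≤ 1) {x : E} (hx : ‖x‖ = 1) :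
    ‖sphereLift t x‖ = 1 := by
  rw [norm_eq_sqrt_real_inner, inner_sphereLift ht₀ ht₁, real_inner_self_eq_norm_sq, hx]
  simp

theorem finrank_withLp_prod_real [FiniteDimensional ℝ E] :
    Module.finrank ℝ (WithLp 2 (E × ℝ)) = Module.finrank ℝ E + 1 := by
  rw [(WithLp.linearEquiv 2 ℝ (E × ℝ)).finrank_eq, Module.finrank_prod, Module.finrank_self]

theorem complement_distance_graph_quadrangular_general (n : ℕ)
    (x : Fin (2 * (n + 1)) → EuclideanSpace ℝ (Fin n))
    (hunit : ∀ i, ‖x i‖ = 1)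
    (halmost : ∀ i j k : Fin (2 * (n + 1)), i ≠ j → i ≠ k → j ≠ k →
      ⟪x i, x j⟫ = -1 / n ∨ ⟪x i, x k⟫ = -1 / n ∨ ⟪x j, x k⟫ = -1 / n) :
    ∀ i j : Fin (2 * (n + 1)), i ≠ j →
      ¬(∃! k : Fin (2 * (n + 1)), k ≠ i ∧ k ≠ j ∧
        ⟪x k, x i⟫ ≠ -1 / n ∧ ⟪x k, x j⟫ ≠ -1 / n) := by
  intro i j hij
  have hn : (0 : ℝ) < n := by
    refine Nat.cast_pos.mpr (Nat.pos_of_ne_zero ?_)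
    rintro rfl
    simpa [Subsingleton.elim (x i) 0] using hunit i
  have ht₀ : (0 : ℝ) ≤ n / (n + 1) := by positivity
  have ht₁ : (n : ℝ) / (n + 1) ≤ 1 := div_le_one_of_le₀ (by linarith) (by positivity)
  set y := fun u => sphereLift ((n : ℝ) / (n + 1)) (x u)
  have horth : ∀ u v, ⟪y u, y v⟫ = 0 ↔ ⟪x u, x v⟫ = -1 / n := by
    intro u v
    rw [inner_sphereLift ht₀ ht₁]
    field_simp
    constructor <;> intro h <;> linarith
  have hy : AlmostOrthogonal y := fun u v w huv huw hvw => by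
    simpa only [horth] using halmost u v w huv huw hvw
  have hcard : Fintype.card (Fin (2 * (n + 1))) =
      2 * Module.finrank ℝ (WithLp 2 (EuclideanSpace ℝ (Fin n) × ℝ)) := by
    rw [finrank_withLp_prod_real, finrank_euclideanSpace_fin, Fintype.card_fin]
  have hyunit : ∀ u, ‖y u‖ = 1 := fun u => norm_sphereLift ht₀ ht₁ (hunit u)
  simpa only [ne_eq, horth] using
    not_existsUnique_common_not_orthogonal hyunit (hy.gram_mul_gram_eq_two_smul hyunit hcard) hij

theorem complement_distance_graph_quadrangular (n : ℕ)
    (x : Fin (2 * (n + 1)) → EuclideanSpace ℝ (Fin n))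
    (hinj : Function.Injective x)
    (hunit : ∀ i, ‖x i‖ = 1)
    (halmost : ∀ i j k : Fin (2 * (n + 1)), i ≠ j → i ≠ k → j ≠ k →
      ⟪x i, x j⟫ = -1 / n ∨ ⟪x i, x k⟫ = -1 / n ∨ ⟪x j, x k⟫ = -1 / n) :
    ∀ i j : Fin (2 * (n + 1)), i ≠ j →
      ¬(∃! k : Fin (2 * (n + 1)), k ≠ i ∧ k ≠ j ∧
        ⟪x k, x i⟫ ≠ -1 / n ∧ ⟪x k, x j⟫ ≠ -1 / n) :=
  complement_distance_graph_quadrangular_general n x hunit halmost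
end

section
/- Let S₁ and S₂ be subsets of S^{n-1} invariant under the subgroup of O(n) stabilizing a point e, and suppose inf{x·y : x ∈ S₁, y ∈ S₂} is attained at p₁ ∈ S₁, p₂ ∈ S₂ with p₁, p₂ ∉ {e, -e}. Then e, p₁, p₂ lie on a common 2-dimensional linear subspace, and if f is a unit vector in that subspace orthogonal to e, then (f·p₁)(f·p₂) < 0. -/
/-!
Write `x = ⟪e, x⟫ • e + qₓ` with `qₓ ⟂ e`, so that `⟪x, y⟫ = ⟪e, x⟫ ⟪e, y⟫ + ⟪qₓ, q_y⟫`.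
The stabilizer of `e` moves `q_{p₂}` to any vector of the same length orthogonal to `e`
(a reflection does it) while fixing `⟪e, p₂⟫`, so minimality of `⟪p₁, p₂⟫` forces
`⟪q_{p₁}, q_{p₂}⟫ = -‖q_{p₁}‖ ‖q_{p₂}‖`: the two orthogonal parts point in opposite directions.
Hence `e, p₁, p₂` lie in the plane spanned by `e` and `q_{p₁}`, whose unit vectors orthogonal
to `e` are `±q_{p₁} / ‖q_{p₁}‖`, and these pair with `p₁` and `p₂` with opposite signs.
-/

open scoped RealInnerProductSpace

variable {E : Type*} [NormedAddCommGroup E] [InnerProductSpace ℝ E]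

theorem finrank_span_pair_of_inner_eq_zero {x y : E} (hx : x ≠ 0) (hy : y ≠ 0)
    (hxy : ⟪x, y⟫ = 0) : Module.finrank ℝ (Submodule.span ℝ {x, y}) = 2 := by
  have hli : LinearIndependent ℝ ![x, y] := by
    refine (LinearIndependent.pair_iff' hx).mpr fun a hyx => hy ?_
    rw [← hyx, real_inner_smul_right, real_inner_self_eq_norm_sq] at hxy
    have ha : a = 0 := by simpa [hx] using hxy
    rw [← hyx, ha, zero_smul]
  rw [← Matrix.range_cons_cons_empty x y ![]]
  simp [finrank_span_eq_card hli]

theorem eq_zero_of_mem_span_pair_of_inner_eq_zero {x y f : E}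
    (hf : f ∈ Submodule.span ℝ {x, y}) (hfx : ⟪f, x⟫ = 0) (hfy : ⟪f, y⟫ = 0) : f = 0 := by
  obtain ⟨a, b, hab⟩ := Submodule.mem_span_pair.mp hf
  rw [← inner_self_eq_zero (𝕜 := ℝ)]
  calc ⟪f, f⟫ = ⟪f, a • x + b • y⟫ := by rw [hab]
    _ = 0 := by simp [inner_add_right, real_inner_smul_right, hfx, hfy]

/-- The component of `x` orthogonal to `e`, provided `‖e‖ = 1`. -/
def orthComponent (e x : E) : E := x - ⟪e, x⟫ • e

section orthComponent

variable {e : E}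

theorem smul_add_orthComponent (e x : E) : ⟪e, x⟫ • e + orthComponent e x = x := by
  simp [orthComponent]

theorem inner_orthComponent_left (he : ‖e‖ = 1) (x : E) : ⟪orthComponent e x, e⟫ = 0 := by
  rw [orthComponent, inner_sub_left, real_inner_smul_left, real_inner_self_eq_norm_sq, he,
    real_inner_comm]
  ring

theorem inner_orthComponent_right_of_inner_eq_zero {f : E} (hf : ⟪f, e⟫ = 0) (x : E) :
    ⟪f, orthComponent e x⟫ = ⟪f, x⟫ := by
  simp [orthComponent, inner_sub_right, real_inner_smul_right, hf]

theorem orthComponent_ne_zero (he : ‖e‖ = 1) {x : E} (hx : ‖x‖ = 1) (hxe : x ≠ e)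
    (hxne : x ≠ -e) : orthComponent e x ≠ 0 := by
  intro h0
  have hx_eq : x = ⟪e, x⟫ • e := sub_eq_zero.mp h0
  have habs : |⟪e, x⟫| = 1 := by
    simpa [norm_smul, he, hx] using (congrArg norm hx_eq).symm
  rcases abs_eq zero_le_one |>.mp habs with h | h
  · exact hxe (by simpa [h] using hx_eq)
  · exact hxne (by simpa [h] using hx_eq)

theorem real_inner_eq_mul_add_inner_orthComponent (he : ‖e‖ = 1) (x y : E) :
    ⟪x, y⟫ = ⟪e, x⟫ * ⟪e, y⟫ + ⟪orthComponent e x, orthComponent e y⟫ := by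
  conv_lhs => rw [← smul_add_orthComponent e x, ← smul_add_orthComponent e y]
  simp only [inner_add_left, inner_add_right, real_inner_smul_left, real_inner_smul_right,
    inner_orthComponent_left he, real_inner_comm (orthComponent e _) e,
    real_inner_self_eq_norm_sq, he]
  ring

theorem LinearIsometryEquiv.inner_map_right_of_map_eq_self (T : E ≃ₗᵢ[ℝ] E) (hT : T e = e)
    (x : E) : ⟪e, T x⟫ = ⟪e, x⟫ :=
  calc ⟪e, T x⟫ = ⟪T e, T x⟫ := by rw [hT]
    _ = ⟪e, x⟫ := T.inner_map_map e x

theorem LinearIsometryEquiv.orthComponent_map (T : E ≃ₗᵢ[ℝ] E) (hT : T e = e) (x : E) :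
    orthComponent e (T x) = T (orthComponent e x) := by
  simp [orthComponent, T.inner_map_right_of_map_eq_self hT, hT]

theorem exists_linearIsometryEquiv_map_eq_fixing {u v : E} (hu : ⟪u, e⟫ = 0)
    (hv : ⟪v, e⟫ = 0) (huv : ‖u‖ = ‖v‖) : ∃ T : E ≃ₗᵢ[ℝ] E, T e = e ∧ T u = v := by
  refine ⟨Submodule.reflection (ℝ ∙ (u - v))ᗮ, ?_, Submodule.reflection_sub huv⟩
  apply Submodule.reflection_mem_subspace_eq_self
  rw [Submodule.mem_orthogonal_singleton_iff_inner_right, inner_sub_left, hu, hv, sub_zero]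

theorem inner_orthComponent_eq_neg_mul_norm_of_le_inner_map (he : ‖e‖ = 1) {x y : E}
    (h : ∀ T : E ≃ₗᵢ[ℝ] E, T e = e → ⟪x, y⟫ ≤ ⟪x, T y⟫) :
    ⟪orthComponent e x, orthComponent e y⟫ = -(‖orthComponent e x‖ * ‖orthComponent e y‖) := by
  set u := orthComponent e x
  set v := orthComponent e y
  refine le_antisymm ?_ (neg_le_of_abs_le (abs_real_inner_le_norm u v))
  rcases eq_or_ne u 0 with hu | hu
  · simp [hu]
  have hu_pos : 0 < ‖u‖ := norm_pos_iff.mpr hu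
  -- move `v`, keeping `e` fixed, onto the ray opposite to `u`
  set w := -(‖v‖ / ‖u‖) • u
  have hwe : ⟪w, e⟫ = 0 := by simp [w, real_inner_smul_left, u, inner_orthComponent_left he]
  have hw_norm : ‖v‖ = ‖w‖ := by simp [w, norm_smul, hu_pos.ne']
  have huw : ⟪u, w⟫ = -(‖u‖ * ‖v‖) := by
    simp only [w, real_inner_smul_right, real_inner_self_eq_norm_sq]
    field_simp
  obtain ⟨T, hTe, hTv⟩ :=
    exists_linearIsometryEquiv_map_eq_fixing (inner_orthComponent_left he y) hwe hw_norm
  have hle := h T hTe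
  rw [real_inner_eq_mul_add_inner_orthComponent he x y,
    real_inner_eq_mul_add_inner_orthComponent he x (T y), T.orthComponent_map hTe,
    T.inner_map_right_of_map_eq_self hTe, hTv, huw] at hle
  linarith

end orthComponent

theorem stabilizer_invariant_min_inner_general (n : ℕ)
    (e : EuclideanSpace ℝ (Fin n)) (he : ‖e‖ = 1)
    (S₁ S₂ : Set (EuclideanSpace ℝ (Fin n)))
    (hS₁ : ∀ x ∈ S₁, ‖x‖ = 1) (hS₂ : ∀ y ∈ S₂, ‖y‖ = 1)
    (hinv₂ : ∀ T : EuclideanSpace ℝ (Fin n) ≃ₗᵢ[ℝ] EuclideanSpace ℝ (Fin n),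
      T e = e → T '' S₂ = S₂)
    (p₁ p₂ : EuclideanSpace ℝ (Fin n)) (hp₁ : p₁ ∈ S₁) (hp₂ : p₂ ∈ S₂)
    (hmin : ∀ x ∈ S₁, ∀ y ∈ S₂, ⟪p₁, p₂⟫ ≤ ⟪x, y⟫)
    (hp₁e : p₁ ≠ e ∧ p₁ ≠ -e) (hp₂e : p₂ ≠ e ∧ p₂ ≠ -e) :
    ∃ W : Submodule ℝ (EuclideanSpace ℝ (Fin n)),
      Module.finrank ℝ W = 2 ∧ e ∈ W ∧ p₁ ∈ W ∧ p₂ ∈ W ∧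
      ∀ f ∈ W, ‖f‖ = 1 → ⟪f, e⟫ = 0 → ⟪f, p₁⟫ * ⟪f, p₂⟫ < 0 := by
  have hmin_orbit : ∀ T : EuclideanSpace ℝ (Fin n) ≃ₗᵢ[ℝ] EuclideanSpace ℝ (Fin n),
      T e = e → ⟪p₁, p₂⟫ ≤ ⟪p₁, T p₂⟫ := fun T hT =>
    hmin _ hp₁ _ (hinv₂ T hT ▸ Set.mem_image_of_mem T hp₂)
  set q₁ := orthComponent e p₁
  set q₂ := orthComponent e p₂
  have hq₁ : q₁ ≠ 0 := orthComponent_ne_zero he (hS₁ p₁ hp₁) hp₁e.1 hp₁e.2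
  have hq₂ : q₂ ≠ 0 := orthComponent_ne_zero he (hS₂ p₂ hp₂) hp₂e.1 hp₂e.2
  obtain ⟨r, hr, hq₂r⟩ := (InnerProductGeometry.angle_eq_pi_iff.mp <|
    (InnerProductGeometry.inner_eq_neg_mul_norm_iff_angle_eq_pi hq₁ hq₂).mp <|
      inner_orthComponent_eq_neg_mul_norm_of_le_inner_map he hmin_orbit).2
  have he0 : e ≠ 0 := norm_ne_zero_iff.mp (he ▸ one_ne_zero)
  have heq₁ : ⟪e, q₁⟫ = 0 := real_inner_comm e q₁ ▸ inner_orthComponent_left he p₁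
  refine ⟨Submodule.span ℝ {e, q₁}, finrank_span_pair_of_inner_eq_zero he0 hq₁ heq₁,
    Submodule.subset_span (by simp),
    Submodule.mem_span_pair.mpr ⟨⟪e, p₁⟫, 1, by rw [one_smul]; exact smul_add_orthComponent e p₁⟩,
    Submodule.mem_span_pair.mpr ⟨⟪e, p₂⟫, r, by rw [← hq₂r]; exact smul_add_orthComponent e p₂⟩,
    fun f hf hf1 hfe => ?_⟩
  have hfq₁ : ⟪f, q₁⟫ ≠ 0 := fun h => by
    simp [eq_zero_of_mem_span_pair_of_inner_eq_zero hf hfe h] at hf1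
  rw [← inner_orthComponent_right_of_inner_eq_zero hfe p₁,
    ← inner_orthComponent_right_of_inner_eq_zero hfe p₂]
  change ⟪f, q₁⟫ * ⟪f, q₂⟫ < 0
  rw [hq₂r, real_inner_smul_right, mul_left_comm]
  exact mul_neg_of_neg_of_pos hr (mul_self_pos.mpr hfq₁)

theorem stabilizer_invariant_min_inner (n : ℕ)
    (e : EuclideanSpace ℝ (Fin n)) (he : ‖e‖ = 1)
    (S₁ S₂ : Set (EuclideanSpace ℝ (Fin n)))
    (hS₁ : ∀ x ∈ S₁, ‖x‖ = 1) (hS₂ : ∀ y ∈ S₂, ‖y‖ = 1)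
    (hinv₁ : ∀ T : EuclideanSpace ℝ (Fin n) ≃ₗᵢ[ℝ] EuclideanSpace ℝ (Fin n),
      T e = e → T '' S₁ = S₁)
    (hinv₂ : ∀ T : EuclideanSpace ℝ (Fin n) ≃ₗᵢ[ℝ] EuclideanSpace ℝ (Fin n),
      T e = e → T '' S₂ = S₂)
    (p₁ p₂ : EuclideanSpace ℝ (Fin n)) (hp₁ : p₁ ∈ S₁) (hp₂ : p₂ ∈ S₂)
    (hmin : ∀ x ∈ S₁, ∀ y ∈ S₂, ⟪p₁, p₂⟫ ≤ ⟪x, y⟫)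
    (hp₁e : p₁ ≠ e ∧ p₁ ≠ -e) (hp₂e : p₂ ≠ e ∧ p₂ ≠ -e) :
    ∃ W : Submodule ℝ (EuclideanSpace ℝ (Fin n)),
      Module.finrank ℝ W = 2 ∧ e ∈ W ∧ p₁ ∈ W ∧ p₂ ∈ W ∧
      ∀ f ∈ W, ‖f‖ = 1 → ⟪f, e⟫ = 0 → ⟪f, p₁⟫ * ⟪f, p₂⟫ < 0 :=
  stabilizer_invariant_min_inner_general n e he S₁ S₂ hS₁ hS₂ hinv₂ p₁ p₂ hp₁ hp₂ hmin hp₁e hp₂e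
end
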